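/- Let Δ be a fan in a lattice N and L ⊆ N a primitive sublattice of codimension 2, and let P : N → N/L be the projection. Define an equivalence relation on the maximal cones of Δ by: σ ∼ τ if there is a sequence σ = σ₀, σ₁, …, σ_r = τ of cones σᵢ ∈ Δ with P^ℝ(σᵢ°) ∩ P^ℝ(σᵢ₊₁°) ≠ ∅, where σ° denotes the relative interior. For each maximal cone σ ∈ Δ let σ̄ be the convex hull of the union of all maximal cones τ with τ ∼ σ. Let V be the sum of the maximal linear subspaces contained in the cones P^ℝ(σ̄), σ ∈ Δ maximal, set L̂ := N ∩ P⁻¹(V), and let Q : N → N/L̂ be the projection. Then the faces of the cones Q^ℝ(σ̄), where σ ranges over the maximal cones of Δ, form the quotient fan of Δ by L. -/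

import Mathlib

open Set

/-- The coercion of an integral vector in `ℤ^n` to a real vector in `ℝ^n`. -/
def toR {n : ℕ} (v : Fin n → ℤ) : Fin n → ℝ := fun i => (v i : ℝ)

/-- The scalar extension `F^ℝ : N^ℝ → N'^ℝ` of a `ℤ`-linear map `F : N → N'`,
where `N = ℤ^n`, `N' = ℤ^m`. -/
noncomputable def extR {n m : ℕ} (F : (Fin n → ℤ) →ₗ[ℤ] (Fin m → ℤ)) :
    (Fin n → ℝ) →ₗ[ℝ] (Fin m → ℝ) :=
  (Matrix.of fun i j => ((F (Pi.single j 1)) i : ℝ)).mulVecLin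

/-- A convex cone: a subset containing `0` that is closed under addition and
under multiplication by nonnegative scalars. -/
def IsCone {V : Type*} [AddCommGroup V] [Module ℝ V] (σ : Set V) : Prop :=
  0 ∈ σ ∧ (∀ x ∈ σ, ∀ y ∈ σ, x + y ∈ σ) ∧ ∀ c : ℝ, 0 ≤ c → ∀ x ∈ σ, c • x ∈ σ

/-- The convex-cone hull of a set: the smallest convex cone containing it. -/
def coneHull {V : Type*} [AddCommGroup V] [Module ℝ V] (s : Set V) : Set V :=
  ⋂₀ {σ | IsCone σ ∧ s ⊆ σ}

/-- A rational polyhedral cone in `ℝ^n`: a convex cone generated by finitely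
many vectors of the lattice `ℤ^n`. -/
def IsRatCone {n : ℕ} (σ : Set (Fin n → ℝ)) : Prop :=
  ∃ s : Finset (Fin n → ℤ), σ = coneHull (toR '' ↑s)

/-- A cone is strictly convex if it contains no nonzero linear subspace,
equivalently `σ ∩ (-σ) = {0}`. -/
def IsStrictlyConvexCone {V : Type*} [AddCommGroup V] [Module ℝ V] (σ : Set V) : Prop :=
  ∀ x ∈ σ, -x ∈ σ → x = 0

/-- `τ` is a face of the convex cone `σ`: a subcone such that whenever
`x, y ∈ σ` and `x + y ∈ τ`, then `x, y ∈ τ`. -/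
def IsFaceOf {V : Type*} [AddCommGroup V] [Module ℝ V] (τ σ : Set V) : Prop :=
  IsCone τ ∧ τ ⊆ σ ∧ ∀ x ∈ σ, ∀ y ∈ σ, x + y ∈ τ → x ∈ τ ∧ y ∈ τ

/-- A system of `N`-cones: a finite set of rational polyhedral cones in `ℝ^n`. -/
def IsConeSystem {n : ℕ} (S : Set (Set (Fin n → ℝ))) : Prop :=
  S.Finite ∧ ∀ σ ∈ S, IsRatCone σ

/-- A quasifan: a finite set of rational polyhedral cones, closed under taking
faces, in which any two cones intersect in a common face. -/
def IsQuasifan {n : ℕ} (Δ : Set (Set (Fin n → ℝ))) : Prop :=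
  IsConeSystem Δ ∧ (∀ σ ∈ Δ, ∀ τ, IsFaceOf τ σ → τ ∈ Δ) ∧
    ∀ σ ∈ Δ, ∀ σ' ∈ Δ, IsFaceOf (σ ∩ σ') σ

/-- A fan: a quasifan all of whose cones are strictly convex. -/
def IsFan {n : ℕ} (Δ : Set (Set (Fin n → ℝ))) : Prop :=
  IsQuasifan Δ ∧ ∀ σ ∈ Δ, IsStrictlyConvexCone σ

/-- `F` defines a map of systems of cones (in particular of (quasi-)fans):
every cone of `S` is mapped by `F^ℝ` into some cone of `S'`. -/
def IsConeMap {n m : ℕ} (F : (Fin n → ℤ) →ₗ[ℤ] (Fin m → ℤ))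
    (S : Set (Set (Fin n → ℝ))) (S' : Set (Set (Fin m → ℝ))) : Prop :=
  ∀ σ ∈ S, ∃ τ ∈ S', extR F '' σ ⊆ τ

/-- A sublattice `L ⊆ ℤ^n` is primitive if the quotient `ℤ^n/L` is
torsion-free. -/
def IsPrimitive {n : ℕ} (L : Submodule ℤ (Fin n → ℤ)) : Prop :=
  ∀ (v : Fin n → ℤ) (k : ℤ), k ≠ 0 → k • v ∈ L → v ∈ L

/-- The set of maximal cones of a system of cones. -/
def maxCones {n : ℕ} (Δ : Set (Set (Fin n → ℝ))) : Set (Set (Fin n → ℝ)) :=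
  {σ ∈ Δ | ∀ τ ∈ Δ, σ ⊆ τ → σ = τ}

/-- `ρ` is a ray (one-dimensional cone) of `Δ`. -/
def IsRay {n : ℕ} (Δ : Set (Set (Fin n → ℝ))) (ρ : Set (Fin n → ℝ)) : Prop :=
  ρ ∈ Δ ∧ Module.finrank ℝ (Submodule.span ℝ ρ) = 1

/-- `Δt`, together with the surjection `P : ℤ^n → ℤ^m` onto the quotient of
`ℤ^n` by the primitive sublattice `L̂ = ker P ⊇ L`, is the quotient fan of the
system of cones `S` by `L`: the projection `P` defines a map of systems of
cones from `S` to the fan `Δt` and every map of systems of cones `F` from `S`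
to a fan with `F(L) = 0` factors through `P` via a map of fans. -/
def IsQuotientFan {n m : ℕ} (S : Set (Set (Fin n → ℝ))) (L : Submodule ℤ (Fin n → ℤ))
    (P : (Fin n → ℤ) →ₗ[ℤ] (Fin m → ℤ)) (Δt : Set (Set (Fin m → ℝ))) : Prop :=
  Function.Surjective P ∧ L ≤ LinearMap.ker P ∧ IsPrimitive (LinearMap.ker P) ∧
  IsFan Δt ∧ IsConeMap P S Δt ∧
  ∀ (k : ℕ) (F : (Fin n → ℤ) →ₗ[ℤ] (Fin k → ℤ)) (Δ' : Set (Set (Fin k → ℝ))),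
    IsFan Δ' → IsConeMap F S Δ' → L ≤ LinearMap.ker F →
    ∃ Ft : (Fin m → ℤ) →ₗ[ℤ] (Fin k → ℤ), IsConeMap Ft Δt Δ' ∧ F = Ft.comp P

/-- The equivalence relation `σ ∼ τ` on cones of `Δ`: there is a sequence
`σ = σ₀, σ₁, …, σ_r = τ` of cones `σᵢ ∈ Δ` such that
`P^ℝ(σᵢ°) ∩ P^ℝ(σᵢ₊₁°) ≠ ∅`, where `°` denotes the relative interior. -/
def simRel {n : ℕ} (Δ : Set (Set (Fin n → ℝ))) (P : (Fin n → ℤ) →ₗ[ℤ] (Fin 2 → ℤ)) :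
    Set (Fin n → ℝ) → Set (Fin n → ℝ) → Prop :=
  Relation.ReflTransGen fun a b => a ∈ Δ ∧ b ∈ Δ ∧
    (extR P '' intrinsicInterior ℝ a ∩ extR P '' intrinsicInterior ℝ b).Nonempty

/-- `σ̄`: the convex hull of the union of all maximal cones `τ` of `Δ` with
`τ ∼ σ`. -/
def barCone {n : ℕ} (Δ : Set (Set (Fin n → ℝ))) (P : (Fin n → ℤ) →ₗ[ℤ] (Fin 2 → ℤ))
    (σ : Set (Fin n → ℝ)) : Set (Fin n → ℝ) :=
  coneHull (⋃₀ {τ | τ ∈ maxCones Δ ∧ simRel Δ P σ τ})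


/-! ### Auxiliary development -/

open Set

section Cones

variable {E F G : Type*} [NormedAddCommGroup E] [NormedSpace ℝ E]
  [NormedAddCommGroup F] [NormedSpace ℝ F] [NormedAddCommGroup G] [NormedSpace ℝ G]

lemma IsCone.zero_mem {σ : Set E} (h : IsCone σ) : (0:E) ∈ σ := h.1
lemma IsCone.add_mem {σ : Set E} (h : IsCone σ) {x y : E} (hx : x ∈ σ) (hy : y ∈ σ) :
    x + y ∈ σ := h.2.1 x hx y hy
lemma IsCone.smul_mem {σ : Set E} (h : IsCone σ) {c : ℝ} (hc : 0 ≤ c) {x : E} (hx : x ∈ σ) :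
    c • x ∈ σ := h.2.2 c hc x hx

lemma IsCone.convex {σ : Set E} (h : IsCone σ) : Convex ℝ σ := by
  intro x hx y hy a b ha hb _
  exact h.add_mem (h.smul_mem ha hx) (h.smul_mem hb hy)

lemma isCone_coneHull (s : Set E) : IsCone (coneHull s) := by
  refine ⟨?_, ?_, ?_⟩
  · intro σ hσ; exact hσ.1.1
  · intro x hx y hy σ hσ; exact hσ.1.2.1 x (hx σ hσ) y (hy σ hσ)
  · intro c hc x hx σ hσ; exact hσ.1.2.2 c hc x (hx σ hσ)

lemma subset_coneHull (s : Set E) : s ⊆ coneHull s := by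
  intro x hx σ hσ; exact hσ.2 hx

lemma coneHull_min {s σ : Set E} (h : IsCone σ) (hs : s ⊆ σ) : coneHull s ⊆ σ :=
  fun _ hx => hx σ ⟨h, hs⟩

lemma coneHull_mono {s t : Set E} (h : s ⊆ t) : coneHull s ⊆ coneHull t :=
  coneHull_min (isCone_coneHull t) (h.trans (subset_coneHull t))

lemma IsCone.coneHull_eq {σ : Set E} (h : IsCone σ) : coneHull σ = σ :=
  le_antisymm (coneHull_min h le_rfl) (subset_coneHull σ)

lemma coneHull_nonempty (s : Set E) : (coneHull s).Nonempty :=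
  ⟨0, (isCone_coneHull s).zero_mem⟩

lemma isCone_inter {σ τ : Set E} (hσ : IsCone σ) (hτ : IsCone τ) : IsCone (σ ∩ τ) :=
  ⟨⟨hσ.zero_mem, hτ.zero_mem⟩,
   fun x hx y hy => ⟨hσ.add_mem hx.1 hy.1, hτ.add_mem hx.2 hy.2⟩,
   fun c hc x hx => ⟨hσ.smul_mem hc hx.1, hτ.smul_mem hc hx.2⟩⟩

lemma isCone_image (f : E →ₗ[ℝ] F) {σ : Set E} (h : IsCone σ) : IsCone (f '' σ) := by
  refine ⟨⟨0, h.zero_mem, map_zero f⟩, ?_, ?_⟩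
  · rintro x ⟨a, ha, rfl⟩ y ⟨b, hb, rfl⟩
    exact ⟨a + b, h.add_mem ha hb, map_add f a b⟩
  · rintro c hc x ⟨a, ha, rfl⟩
    exact ⟨c • a, h.smul_mem hc ha, map_smul f c a⟩

lemma isCone_preimage (f : E →ₗ[ℝ] F) {σ : Set F} (h : IsCone σ) : IsCone (f ⁻¹' σ) := by
  refine ⟨?_, ?_, ?_⟩
  · show f 0 ∈ σ; rw [map_zero]; exact h.zero_mem
  · intro x hx y hy; show f (x + y) ∈ σ; rw [map_add]; exact h.add_mem hx hy
  · intro c hc x hx; show f (c • x) ∈ σ; rw [map_smul]; exact h.smul_mem hc hx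

lemma image_coneHull (f : E →ₗ[ℝ] F) (s : Set E) :
    f '' coneHull s = coneHull (f '' s) := by
  apply le_antisymm
  · rintro _ ⟨x, hx, rfl⟩
    have : coneHull s ⊆ f ⁻¹' coneHull (f '' s) := by
      apply coneHull_min (isCone_preimage f (isCone_coneHull _))
      intro a ha; exact subset_coneHull _ ⟨a, ha, rfl⟩
    exact this hx
  · apply coneHull_min (isCone_image f (isCone_coneHull s))
    exact image_mono (f := f) (subset_coneHull s)

/-- nonnegative combinations as lists -/
def lcomb (l : List (ℝ × E)) : E := (l.map fun p => p.1 • p.2).sum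

lemma lcomb_nil : lcomb ([] : List (ℝ × E)) = 0 := rfl

lemma lcomb_cons (p : ℝ × E) (l : List (ℝ × E)) : lcomb (p :: l) = p.1 • p.2 + lcomb l := by
  simp [lcomb]

lemma lcomb_append (l₁ l₂ : List (ℝ × E)) : lcomb (l₁ ++ l₂) = lcomb l₁ + lcomb l₂ := by
  simp [lcomb]

lemma lcomb_mem {σ : Set E} (h : IsCone σ) {l : List (ℝ × E)}
    (hl : ∀ p ∈ l, 0 ≤ p.1 ∧ p.2 ∈ σ) : lcomb l ∈ σ := by
  induction l with
  | nil => exact h.zero_mem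
  | cons p l ih =>
    rw [lcomb_cons]
    refine h.add_mem (h.smul_mem (hl p (by simp)).1 (hl p (by simp)).2) ?_
    exact ih fun q hq => hl q (by simp [hq])

lemma coneHull_eq_lcomb (s : Set E) :
    coneHull s = {x | ∃ l : List (ℝ × E), (∀ p ∈ l, 0 ≤ p.1 ∧ p.2 ∈ s) ∧ x = lcomb l} := by
  apply le_antisymm
  · apply coneHull_min
    · refine ⟨⟨[], by simp, rfl⟩, ?_, ?_⟩
      · rintro x ⟨l₁, hl₁, rfl⟩ y ⟨l₂, hl₂, rfl⟩
        refine ⟨l₁ ++ l₂, ?_, (lcomb_append l₁ l₂).symm⟩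
        intro p hp
        rcases List.mem_append.1 hp with h | h
        · exact hl₁ p h
        · exact hl₂ p h
      · rintro c hc x ⟨l, hl, rfl⟩
        refine ⟨l.map fun p => (c * p.1, p.2), ?_, ?_⟩
        · rintro p hp
          rcases List.mem_map.1 hp with ⟨q, hq, rfl⟩
          exact ⟨mul_nonneg hc (hl q hq).1, (hl q hq).2⟩
        · induction l with
          | nil => simp [lcomb]
          | cons q l ih =>
            have hql : ∀ p ∈ l, 0 ≤ p.1 ∧ p.2 ∈ s := fun p hp => hl p (by simp [hp])
            simp only [List.map_cons, lcomb_cons, smul_add, ih hql, mul_smul]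
    · intro x hx
      exact ⟨[(1, x)], by simp [hx], by simp [lcomb]⟩
  · rintro x ⟨l, hl, rfl⟩
    exact lcomb_mem (isCone_coneHull s)
      (fun p hp => ⟨(hl p hp).1, subset_coneHull s (hl p hp).2⟩)

/-! ### faces -/

lemma isFaceOf_refl {σ : Set E} (h : IsCone σ) : IsFaceOf σ σ :=
  ⟨h, le_rfl, fun x hx y hy _ => ⟨hx, hy⟩⟩

lemma IsFaceOf.trans {ρ τ σ : Set E} (h₁ : IsFaceOf ρ τ) (h₂ : IsFaceOf τ σ) :
    IsFaceOf ρ σ := by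
  refine ⟨h₁.1, h₁.2.1.trans h₂.2.1, ?_⟩
  intro x hx y hy hxy
  have h' := h₂.2.2 x hx y hy (h₁.2.1 hxy)
  exact h₁.2.2 x h'.1 y h'.2 hxy

lemma isFaceOf_zero {σ : Set E} (h : IsCone σ) (hs : IsStrictlyConvexCone σ) :
    IsFaceOf {0} σ := by
  refine ⟨⟨rfl, ?_, ?_⟩, by intro x hx; rw [hx]; exact h.zero_mem, ?_⟩
  · rintro x rfl y rfl; simp
  · rintro c _ x rfl; simp
  · intro x hx y hy hxy
    have hy' : y = -x := by
      have : x + y = 0 := hxy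
      linear_combination (norm := abel) this
    have hx0 : x = 0 := hs x hx (hy' ▸ hy)
    constructor
    · exact hx0
    · rw [hy', hx0]; simp

lemma IsStrictlyConvexCone.subset {τ σ : Set E} (h : τ ⊆ σ)
    (hs : IsStrictlyConvexCone σ) : IsStrictlyConvexCone τ :=
  fun x hx hnx => hs x (h hx) (h hnx)

lemma lineality_isFaceOf {σ : Set E} (h : IsCone σ) :
    IsFaceOf {x | x ∈ σ ∧ -x ∈ σ} σ := by
  refine ⟨⟨⟨h.zero_mem, by simpa using h.zero_mem⟩, ?_, ?_⟩, fun x hx => hx.1, ?_⟩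
  · intro x hx y hy
    exact ⟨h.add_mem hx.1 hy.1, by rw [neg_add]; exact h.add_mem hx.2 hy.2⟩
  · intro c hc x hx
    exact ⟨h.smul_mem hc hx.1, by rw [← smul_neg]; exact h.smul_mem hc hx.2⟩
  · intro x hx y hy hxy
    have hmx : -x ∈ σ := by
      have : -x = y + -(x + y) := by abel
      rw [this]; exact h.add_mem hy hxy.2
    have hmy : -y ∈ σ := by
      have : -y = x + -(x + y) := by abel
      rw [this]; exact h.add_mem hx hxy.2
    exact ⟨⟨hx, hmx⟩, ⟨hy, hmy⟩⟩

lemma face_eq_coneHull_inter {s τ : Set E} (h : IsFaceOf τ (coneHull s)) :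
    τ = coneHull (s ∩ τ) := by
  have aux : ∀ l : List (ℝ × E), (∀ p ∈ l, 0 ≤ p.1 ∧ p.2 ∈ s) → lcomb l ∈ τ →
      lcomb l ∈ coneHull (s ∩ τ) := by
    intro l
    induction l with
    | nil => intro _ _; exact (isCone_coneHull _).zero_mem
    | cons p l ih =>
      intro hl hx
      rw [lcomb_cons] at hx ⊢
      have hterm : p.1 • p.2 ∈ coneHull s :=
        (isCone_coneHull s).smul_mem (hl p (by simp)).1 (subset_coneHull s (hl p (by simp)).2)
      have hrest : lcomb l ∈ coneHull s :=
        lcomb_mem (isCone_coneHull s)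
          (fun q hq => ⟨(hl q (by simp [hq])).1, subset_coneHull s (hl q (by simp [hq])).2⟩)
      have habs := h.2.2 _ hterm _ hrest hx
      have h1 : p.1 • p.2 ∈ coneHull (s ∩ τ) := by
        rcases eq_or_lt_of_le (hl p (by simp)).1 with hz | hpos
        · rw [← hz, zero_smul]; exact (isCone_coneHull _).zero_mem
        · have hp2 : p.2 ∈ τ := by
            have := h.1.2.2 p.1⁻¹ (le_of_lt (inv_pos.2 hpos)) _ habs.1
            rwa [inv_smul_smul₀ (ne_of_gt hpos)] at this
          exact (isCone_coneHull _).smul_mem (le_of_lt hpos)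
            (subset_coneHull _ ⟨(hl p (by simp)).2, hp2⟩)
      exact (isCone_coneHull _).add_mem h1
        (ih (fun q hq => hl q (by simp [hq])) habs.2)
  apply le_antisymm
  · intro x hx
    have hx' := h.2.1 hx
    rw [coneHull_eq_lcomb] at hx'
    obtain ⟨l, hl, hleq⟩ := hx'
    rw [hleq] at hx ⊢
    exact aux l hl hx
  · exact coneHull_min h.1 (fun x hx => hx.2)

lemma finite_faces {s : Set E} (hs : s.Finite) :
    {τ | IsFaceOf τ (coneHull s)}.Finite := by
  have : {τ | IsFaceOf τ (coneHull s)} ⊆ (fun t => coneHull t) '' {t | t ⊆ s} := by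
    intro τ hτ
    exact ⟨s ∩ τ, inter_subset_left, (face_eq_coneHull_inter hτ).symm⟩
  exact ((hs.finite_subsets).image _).subset this

end Cones

/-! ### toR and extR -/

section ExtR

lemma pi_decomp {n : ℕ} {R : Type*} [Semiring R] (v : Fin n → R) :
    v = ∑ j, v j • (Pi.single j (1:R) : Fin n → R) := by
  funext k
  rw [Finset.sum_apply]
  have : ∀ j, (v j • (Pi.single j (1:R) : Fin n → R)) k = if k = j then v j else 0 := by
    intro j
    by_cases h : k = j <;> simp [Pi.single_apply, h]
  simp only [this]
  simp

lemma toR_single {n : ℕ} (j : Fin n) : toR (Pi.single j (1:ℤ)) = Pi.single j (1:ℝ) := by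
  funext k
  by_cases h : k = j <;> simp [toR, Pi.single_apply, h]

lemma toR_eq_zero {n : ℕ} {v : Fin n → ℤ} : toR v = 0 ↔ v = 0 := by
  constructor
  · intro h
    funext i
    have h'' : (v i : ℝ) = 0 := congrFun h i
    have hvi : v i = 0 := by exact_mod_cast h''
    simpa using hvi
  · rintro rfl; funext i; simp [toR]

lemma extR_toR {n m : ℕ} (F : (Fin n → ℤ) →ₗ[ℤ] (Fin m → ℤ)) (v : Fin n → ℤ) :
    extR F (toR v) = toR (F v) := by
  funext i
  have h1 : extR F (toR v) i = ∑ j, ((F (Pi.single j 1)) i : ℝ) * (v j : ℝ) := by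
    simp [extR, Matrix.mulVecLin_apply, Matrix.mulVec, dotProduct, toR]
  have h2 : F v = ∑ j, v j • F (Pi.single j 1) := by
    conv_lhs => rw [pi_decomp v]
    rw [map_sum]
    exact Finset.sum_congr rfl fun j _ => map_smul F (v j) _
  rw [h1]
  show _ = ((F v) i : ℝ)
  rw [h2, Finset.sum_apply]
  push_cast
  apply Finset.sum_congr rfl
  intro j _
  simp [mul_comm]

lemma funext_basis {n m : ℕ} {f g : (Fin n → ℝ) →ₗ[ℝ] (Fin m → ℝ)}
    (h : ∀ j, f (Pi.single j 1) = g (Pi.single j 1)) : f = g := by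
  apply (Pi.basisFun ℝ (Fin n)).ext
  intro j
  simpa [Pi.basisFun_apply] using h j

lemma extR_comp {n m k : ℕ} (F : (Fin m → ℤ) →ₗ[ℤ] (Fin k → ℤ))
    (G : (Fin n → ℤ) →ₗ[ℤ] (Fin m → ℤ)) :
    extR (F ∘ₗ G) = (extR F) ∘ₗ (extR G) := by
  apply funext_basis
  intro j
  rw [LinearMap.comp_apply, ← toR_single, extR_toR, extR_toR, extR_toR]
  rfl

lemma extR_surj {n m : ℕ} {F : (Fin n → ℤ) →ₗ[ℤ] (Fin m → ℤ)}
    (h : Function.Surjective F) : Function.Surjective (extR F) := by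
  intro y
  have hy : (∑ i, y i • (Pi.single i (1:ℝ) : Fin m → ℝ)) ∈ LinearMap.range (extR F) := by
    apply Submodule.sum_mem
    intro i _
    apply Submodule.smul_mem
    obtain ⟨u, hu⟩ := h (Pi.single i 1)
    exact ⟨toR u, by rw [extR_toR, hu, toR_single]⟩
  rw [← pi_decomp y] at hy
  exact hy

lemma exists_section {n m : ℕ} {F : (Fin n → ℤ) →ₗ[ℤ] (Fin m → ℤ)}
    (h : Function.Surjective F) :
    ∃ s : (Fin m → ℤ) →ₗ[ℤ] (Fin n → ℤ), F ∘ₗ s = LinearMap.id :=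
  Module.projective_lifting_property F LinearMap.id h

lemma factor_through {n m k : ℕ} {F : (Fin n → ℤ) →ₗ[ℤ] (Fin m → ℤ)}
    {G : (Fin n → ℤ) →ₗ[ℤ] (Fin k → ℤ)}
    (hF : Function.Surjective F) (hker : LinearMap.ker F ≤ LinearMap.ker G) :
    ∃ H : (Fin m → ℤ) →ₗ[ℤ] (Fin k → ℤ), G = H ∘ₗ F := by
  obtain ⟨s, hs⟩ := exists_section hF
  refine ⟨G ∘ₗ s, ?_⟩
  apply LinearMap.ext; intro v
  have hk : s (F v) - v ∈ LinearMap.ker F := by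
    rw [LinearMap.mem_ker, map_sub, sub_eq_zero]
    have := congrArg (fun f => f (F v)) hs
    simpa using this
  have h0 : G (s (F v)) - G v = 0 := by
    have := hker hk
    rwa [LinearMap.mem_ker, map_sub] at this
  have h0' := sub_eq_zero.mp h0
  simp [LinearMap.comp_apply, h0']

end ExtR

/-! ### relative interior toolkit -/

section Relint

variable {E F : Type*} [NormedAddCommGroup E] [NormedSpace ℝ E]
  [NormedAddCommGroup F] [NormedSpace ℝ F]

lemma mem_affineSpan_iff_span {s : Set E} (h0 : (0:E) ∈ s) {x : E} :
    x ∈ affineSpan ℝ s ↔ x ∈ Submodule.span ℝ s := by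
  constructor
  · intro hx
    have hle : affineSpan ℝ s ≤ (Submodule.span ℝ s).toAffineSubspace := by
      rw [affineSpan_le]
      intro y hy
      show y ∈ (Submodule.span ℝ s).toAffineSubspace
      rw [Submodule.mem_toAffineSubspace]
      exact Submodule.subset_span hy
    have h' := hle hx
    simpa [Submodule.mem_toAffineSubspace] using h'
  · intro hx
    induction hx using Submodule.span_induction with
    | mem y hy => exact subset_affineSpan ℝ s hy
    | zero => exact subset_affineSpan ℝ s h0
    | add y z _ _ hy hz =>
      have := (affineSpan ℝ s).smul_vsub_vadd_mem (1:ℝ) hy (subset_affineSpan ℝ s h0) hz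
      simpa using this
    | smul c y _ hy =>
      have := (affineSpan ℝ s).smul_vsub_vadd_mem c hy (subset_affineSpan ℝ s h0)
        (subset_affineSpan ℝ s h0)
      simpa using this

lemma mem_relint {s : Set E} (h0 : (0:E) ∈ s) {x : E} :
    x ∈ intrinsicInterior ℝ s ↔
      x ∈ s ∧ ∃ δ > 0, ∀ v : E, v ∈ Submodule.span ℝ s → ‖v‖ < δ → x + v ∈ s := by
  rw [mem_intrinsicInterior]
  constructor
  · rintro ⟨y, hy, rfl⟩
    have hys0 := interior_subset hy
    have hys : (y:E) ∈ s := hys0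
    refine ⟨hys, ?_⟩
    rw [mem_interior_iff_mem_nhds, Metric.mem_nhds_iff] at hy
    obtain ⟨ε, hε, hball⟩ := hy
    refine ⟨ε, hε, ?_⟩
    intro v hv hvn
    have hmem : (y:E) + v ∈ affineSpan ℝ s := by
      rw [mem_affineSpan_iff_span h0]
      exact Submodule.add_mem _ ((mem_affineSpan_iff_span h0).1 y.2) hv
    have hb : (⟨(y:E)+v, hmem⟩ : affineSpan ℝ s) ∈ Metric.ball y ε := by
      rw [Metric.mem_ball, Subtype.dist_eq]
      simpa [dist_eq_norm] using hvn
    exact hball hb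
  · rintro ⟨hxs, δ, hδ, h⟩
    refine ⟨⟨x, subset_affineSpan ℝ s hxs⟩, ?_, rfl⟩
    rw [mem_interior_iff_mem_nhds, Metric.mem_nhds_iff]
    refine ⟨δ, hδ, ?_⟩
    intro z hz
    rw [Metric.mem_ball, Subtype.dist_eq, dist_eq_norm] at hz
    have hv : (z:E) - x ∈ Submodule.span ℝ s := by
      have hz' := (mem_affineSpan_iff_span h0).1 z.2
      have hx' := (mem_affineSpan_iff_span h0).1 (subset_affineSpan ℝ s hxs)
      exact Submodule.sub_mem _ hz' hx'
    have hzs := h _ hv (by simpa using hz)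
    show (z:E) ∈ s
    have hxz : x + ((z:E) - x) = (z:E) := by abel
    rwa [hxz] at hzs

lemma relint_subset' {s : Set E} : intrinsicInterior ℝ s ⊆ s := intrinsicInterior_subset

lemma relint_nonempty [FiniteDimensional ℝ E] {σ : Set E} (h : IsCone σ) :
    (intrinsicInterior ℝ σ).Nonempty :=
  Set.Nonempty.intrinsicInterior h.convex ⟨0, h.zero_mem⟩

lemma relint_smul {σ : Set E} (h : IsCone σ) {t : ℝ} (ht : 0 < t) {x : E}
    (hx : x ∈ intrinsicInterior ℝ σ) : t • x ∈ intrinsicInterior ℝ σ := by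
  rw [mem_relint h.zero_mem] at hx ⊢
  obtain ⟨hxσ, δ, hδ, hb⟩ := hx
  refine ⟨h.smul_mem ht.le hxσ, t * δ, by positivity, ?_⟩
  intro v hv hvn
  have he : t • x + v = t • (x + t⁻¹ • v) := by
    rw [smul_add, smul_inv_smul₀ (ne_of_gt ht)]
  rw [he]
  apply h.smul_mem ht.le
  apply hb _ (Submodule.smul_mem _ _ hv)
  rw [norm_smul, norm_inv, Real.norm_eq_abs, abs_of_pos ht]
  calc t⁻¹ * ‖v‖ < t⁻¹ * (t * δ) := by
        apply mul_lt_mul_of_pos_left hvn (by positivity)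
    _ = δ := by field_simp

lemma relint_add_mem {σ : Set E} (h : IsCone σ) {x y : E}
    (hx : x ∈ intrinsicInterior ℝ σ) (hy : y ∈ σ) : x + y ∈ intrinsicInterior ℝ σ := by
  rw [mem_relint h.zero_mem] at hx ⊢
  obtain ⟨hxσ, δ, hδ, hb⟩ := hx
  refine ⟨h.add_mem hxσ hy, δ, hδ, fun v hv hvn => ?_⟩
  have he : x + y + v = (x + v) + y := by abel
  rw [he]; exact h.add_mem (hb v hv hvn) hy

lemma relint_combo {σ : Set E} (h : IsCone σ) {a b : E} (ha : a ∈ σ)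
    (hb : b ∈ intrinsicInterior ℝ σ) {t : ℝ} (ht : 0 < t) :
    a + t • b ∈ intrinsicInterior ℝ σ := by
  have := relint_add_mem h (relint_smul h ht hb) ha
  rwa [add_comm] at this

lemma relint_ball {σ : Set E} (h0 : (0:E) ∈ σ) {x : E}
    (hx : x ∈ intrinsicInterior ℝ σ) :
    ∃ δ > 0, ∀ v ∈ Submodule.span ℝ σ, ‖v‖ < δ → x + v ∈ intrinsicInterior ℝ σ := by
  rw [mem_relint h0] at hx
  obtain ⟨hxσ, δ, hδ, hb⟩ := hx
  refine ⟨δ/2, by positivity, fun v hv hvn => ?_⟩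
  rw [mem_relint h0]
  have hvδ : ‖v‖ < δ := by linarith
  refine ⟨hb v hv hvδ, δ/2, by positivity, fun w hw hwn => ?_⟩
  have he : x + v + w = x + (v + w) := by abel
  rw [he]
  apply hb _ (Submodule.add_mem _ hv hw)
  calc ‖v + w‖ ≤ ‖v‖ + ‖w‖ := norm_add_le v w
    _ < δ := by linarith

lemma relint_zero_symm {σ : Set E} (h : IsCone σ)
    (h0 : (0:E) ∈ intrinsicInterior ℝ σ) {x : E} (hx : x ∈ σ) : -x ∈ σ := by
  rw [mem_relint h.zero_mem] at h0
  obtain ⟨_, δ, hδ, hb⟩ := h0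
  by_cases hx0 : x = 0
  · rw [hx0, neg_zero]; exact h.zero_mem
  have hxn : 0 < ‖x‖ := norm_pos_iff.2 hx0
  set c := δ / (2 * ‖x‖) with hc
  have hc0 : 0 < c := by positivity
  have hmem : (0:E) + (-(c • x)) ∈ σ := by
    apply hb
    · exact Submodule.neg_mem _ (Submodule.smul_mem _ _ (Submodule.subset_span hx))
    · rw [norm_neg, norm_smul, Real.norm_eq_abs, abs_of_pos hc0, hc]
      rw [div_mul_eq_mul_div, mul_comm]
      calc ‖x‖ * δ / (2 * ‖x‖) = δ/2 := by field_simp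
        _ < δ := by linarith
  rw [zero_add] at hmem
  have := h.smul_mem (le_of_lt (inv_pos.2 hc0)) hmem
  rw [smul_neg, inv_smul_smul₀ (ne_of_gt hc0)] at this
  exact this

lemma relint_sub {σ : Set E} (h : IsCone σ) {x y : E}
    (hx : x ∈ intrinsicInterior ℝ σ) (hy : y ∈ σ) : ∃ ε : ℝ, 0 < ε ∧ x - ε • y ∈ σ := by
  rw [mem_relint h.zero_mem] at hx
  obtain ⟨hxσ, δ, hδ, hb⟩ := hx
  by_cases hy0 : y = 0
  · exact ⟨1, one_pos, by simpa [hy0] using hxσ⟩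

  have hyn : 0 < ‖y‖ := norm_pos_iff.2 hy0
  refine ⟨δ / (2 * ‖y‖), by positivity, ?_⟩
  have hres := hb (-((δ / (2 * ‖y‖)) • y))
    (Submodule.neg_mem _ (Submodule.smul_mem _ _ (Submodule.subset_span hy)))
    (by rw [norm_neg, norm_smul, Real.norm_eq_abs, abs_of_pos (by positivity)]
        rw [div_mul_eq_mul_div, mul_comm]
        calc ‖y‖ * δ / (2 * ‖y‖) = δ/2 := by field_simp
          _ < δ := by linarith)
  rwa [← sub_eq_add_neg] at hres

lemma relint_image_subset (f : E →ₗ[ℝ] F) (σ : Set E) :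
    f '' intrinsicInterior ℝ σ ⊆ f '' σ :=
  image_mono (f := f) relint_subset'

lemma relint_image_superset [FiniteDimensional ℝ E] {f : E →ₗ[ℝ] F} {σ : Set E}
    (h : IsCone σ) :
    intrinsicInterior ℝ (f '' σ) ⊆ f '' intrinsicInterior ℝ σ := by
  intro w hw
  obtain ⟨y₀, hy₀⟩ := relint_nonempty h
  have himg : IsCone (f '' σ) := isCone_image f h
  rw [mem_relint himg.zero_mem] at hw
  obtain ⟨hws, δ, hδ, hb⟩ := hw
  set v := w - f y₀ with hv
  have hvspan : v ∈ Submodule.span ℝ (f '' σ) :=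
    Submodule.sub_mem _ (Submodule.subset_span hws)
      (Submodule.subset_span ⟨y₀, relint_subset' hy₀, rfl⟩)
  by_cases hv0 : v = 0
  · have hw0 : w = f y₀ := by
      have h' : w - f y₀ = 0 := hv0
      have := sub_eq_zero.mp h'
      exact this
    exact ⟨y₀, hy₀, hw0.symm⟩
  · have hvn : 0 < ‖v‖ := norm_pos_iff.2 hv0
    set ε := δ / (2 * ‖v‖) with hε
    have hε0 : 0 < ε := by positivity
    have hmem : w + ε • v ∈ f '' σ := by
      apply hb
      · exact Submodule.smul_mem _ _ hvspan
      · rw [norm_smul, Real.norm_eq_abs, abs_of_pos hε0, hε]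
        rw [div_mul_eq_mul_div, mul_comm]
        calc ‖v‖ * δ / (2 * ‖v‖) = δ/2 := by field_simp
          _ < δ := by linarith
    obtain ⟨y₁, hy₁, hyeq⟩ := hmem
    refine ⟨(1/(1+ε)) • (y₁ + ε • y₀), ?_, ?_⟩
    · exact relint_smul h (by positivity) (relint_combo h hy₁ hy₀ hε0)
    · rw [map_smul, map_add, map_smul, hyeq, hv]
      have h1ε : (1:ℝ) + ε ≠ 0 := by positivity
      have key : w + ε • (w - f y₀) + ε • f y₀ = (1+ε) • w := by
        rw [smul_sub, add_smul, one_smul]; abel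
      rw [key, smul_smul, one_div, inv_mul_cancel₀ h1ε, one_smul]

end Relint

/-! ### 2D determinant toolkit -/

section Det2

def det2 (u v : Fin 2 → ℝ) : ℝ := u 0 * v 1 - u 1 * v 0

lemma det2_self (u : Fin 2 → ℝ) : det2 u u = 0 := by simp [det2]; ring

lemma det2_add_right (u v w : Fin 2 → ℝ) : det2 u (v + w) = det2 u v + det2 u w := by
  simp [det2]; ring

lemma det2_smul_right (u : Fin 2 → ℝ) (c : ℝ) (v : Fin 2 → ℝ) :
    det2 u (c • v) = c * det2 u v := by
  simp [det2]; ring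

lemma det2_sub_right (u v w : Fin 2 → ℝ) : det2 u (v - w) = det2 u v - det2 u w := by
  simp [det2]; ring

lemma det2_neg_right (u v : Fin 2 → ℝ) : det2 u (-v) = - det2 u v := by
  simp [det2]; ring

lemma det2_swap (u v : Fin 2 → ℝ) : det2 u v = - det2 v u := by simp [det2]; ring

lemma eq_zero_of_components {z : Fin 2 → ℝ} (h0 : z 0 = 0) (h1 : z 1 = 0) : z = 0 := by
  funext i; fin_cases i <;> simpa

lemma det2_eq_zero_iff {z v : Fin 2 → ℝ} (hz : z ≠ 0) :
    det2 z v = 0 ↔ ∃ t : ℝ, v = t • z := by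
  constructor
  · intro h
    rcases (by
      by_contra hcon
      push_neg at hcon
      exact hz (eq_zero_of_components hcon.1 hcon.2) : z 0 ≠ 0 ∨ z 1 ≠ 0) with h0 | h1
    · refine ⟨v 0 / z 0, ?_⟩
      funext i
      fin_cases i
      · simp; field_simp
      · simp only [Pi.smul_apply, smul_eq_mul]
        have : z 0 * v 1 = z 1 * v 0 := by
          have := h; simp [det2] at this; linarith
        field_simp
        simp only [Fin.zero_eta, Fin.mk_one] at *; linarith [this]
    · refine ⟨v 1 / z 1, ?_⟩
      funext i
      fin_cases i
      · simp only [Pi.smul_apply, smul_eq_mul]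
        have : z 0 * v 1 = z 1 * v 0 := by
          have := h; simp [det2] at this; linarith
        field_simp
        simp only [Fin.zero_eta, Fin.mk_one] at *; linarith [this]
      · simp; field_simp
  · rintro ⟨t, rfl⟩
    simp [det2]; ring

lemma det2_cramer {m u : Fin 2 → ℝ} (hD : det2 m u ≠ 0) (w : Fin 2 → ℝ) :
    w = (det2 w u / det2 m u) • m + (det2 m w / det2 m u) • u := by
  funext i
  have hD' : m 0 * u 1 - m 1 * u 0 ≠ 0 := hD
  have hD'' : u 1 * m 0 - u 0 * m 1 ≠ 0 := fun h => hD' (by linarith)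
  fin_cases i <;>
    (simp only [Pi.add_apply, Pi.smul_apply, smul_eq_mul, det2, Fin.zero_eta, Fin.mk_one]; field_simp; ring)

lemma span_top_of_det2 {s : Set (Fin 2 → ℝ)} {x y : Fin 2 → ℝ}
    (hx : x ∈ s) (hy : y ∈ s) (h : det2 x y ≠ 0) :
    Submodule.span ℝ s = ⊤ := by
  rw [eq_top_iff]
  intro w _
  rw [det2_cramer h w]
  exact Submodule.add_mem _
    (Submodule.smul_mem _ _ (Submodule.subset_span hx))
    (Submodule.smul_mem _ _ (Submodule.subset_span hy))

lemma abs_det2_le (u v : Fin 2 → ℝ) : |det2 u v| ≤ 2 * ‖u‖ * ‖v‖ := by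
  have h00 : |u 0| ≤ ‖u‖ := by
    have := norm_le_pi_norm u 0; simpa using this
  have h01 : |u 1| ≤ ‖u‖ := by
    have := norm_le_pi_norm u 1; simpa using this
  have h10 : |v 0| ≤ ‖v‖ := by
    have := norm_le_pi_norm v 0; simpa using this
  have h11 : |v 1| ≤ ‖v‖ := by
    have := norm_le_pi_norm v 1; simpa using this
  have hu0 : (0:ℝ) ≤ |u 0| := abs_nonneg _
  have hv0 : (0:ℝ) ≤ |v 0| := abs_nonneg _
  have hu1 : (0:ℝ) ≤ |u 1| := abs_nonneg _
  have hv1 : (0:ℝ) ≤ |v 1| := abs_nonneg _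
  calc |det2 u v| ≤ |u 0 * v 1| + |u 1 * v 0| := abs_sub _ _
    _ = |u 0| * |v 1| + |u 1| * |v 0| := by rw [abs_mul, abs_mul]
    _ ≤ ‖u‖ * ‖v‖ + ‖u‖ * ‖v‖ := by
        apply add_le_add <;> apply mul_le_mul <;>
          first | assumption | positivity | exact le_trans (abs_nonneg _) (by assumption)
    _ = 2 * ‖u‖ * ‖v‖ := by ring

end Det2

/-! ### maximal cones -/

lemma exists_maxCone {n : ℕ} {Δ : Set (Set (Fin n → ℝ))} (hfin : Δ.Finite)
    {c : Set (Fin n → ℝ)} (hc : c ∈ Δ) : ∃ τ ∈ maxCones Δ, c ⊆ τ := by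
  obtain ⟨τ, hτ, hmax⟩ := Set.Finite.exists_maximalFor id {σ ∈ Δ | c ⊆ σ}
    (hfin.subset (fun x hx => hx.1)) ⟨c, hc, le_rfl⟩
  refine ⟨τ, ⟨hτ.1, ?_⟩, hτ.2⟩
  intro σ hσ hsub
  exact le_antisymm hsub (hmax ⟨hσ, hτ.2.trans hsub⟩ hsub)


/-! ### pieces and the sim relation -/

section Walk

variable {n : ℕ}

/-- the image of the relative interior of a cone -/
def piece (P : (Fin n → ℤ) →ₗ[ℤ] (Fin 2 → ℤ)) (c : Set (Fin n → ℝ)) : Set (Fin 2 → ℝ) :=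
  extR P '' intrinsicInterior ℝ c

lemma simRel_eq (Δ : Set (Set (Fin n → ℝ))) (P : (Fin n → ℤ) →ₗ[ℤ] (Fin 2 → ℤ)) :
    simRel Δ P = Relation.ReflTransGen
      (fun a b => a ∈ Δ ∧ b ∈ Δ ∧ (piece P a ∩ piece P b).Nonempty) := rfl

variable {Δ : Set (Set (Fin n → ℝ))} {P : (Fin n → ℤ) →ₗ[ℤ] (Fin 2 → ℤ)}

lemma simRel_symm {a b : Set (Fin n → ℝ)} (h : simRel Δ P a b) : simRel Δ P b a := by
  rw [simRel_eq] at h ⊢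
  induction h with
  | refl => exact Relation.ReflTransGen.refl
  | tail _ hbc ih =>
    refine Relation.ReflTransGen.head ⟨hbc.2.1, hbc.1, ?_⟩ ih
    rw [Set.inter_comm]; exact hbc.2.2

lemma simRel_mem_right {σ c : Set (Fin n → ℝ)} (hσ : σ ∈ Δ) (h : simRel Δ P σ c) :
    c ∈ Δ := by
  rw [simRel_eq] at h
  induction h with
  | refl => exact hσ
  | tail _ hbc _ => exact hbc.2.1

lemma simRel_merge {σ τ c c' : Set (Fin n → ℝ)} (hσc : simRel Δ P σ c)
    (hτc' : simRel Δ P τ c') (hc : c ∈ Δ) (hc' : c' ∈ Δ)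
    (hint : (piece P c ∩ piece P c').Nonempty) : simRel Δ P σ τ := by
  rw [simRel_eq] at hσc hτc' ⊢
  exact (hσc.tail ⟨hc, hc', hint⟩).trans (simRel_symm hτc')

lemma barCone_isCone (σ : Set (Fin n → ℝ)) : IsCone (barCone Δ P σ) :=
  isCone_coneHull _

lemma subset_barCone {σ τ : Set (Fin n → ℝ)} (hτ : τ ∈ maxCones Δ)
    (hsim : simRel Δ P σ τ) : τ ⊆ barCone Δ P σ := by
  refine (subset_sUnion_of_mem ?_).trans (subset_coneHull _)
  exact ⟨hτ, hsim⟩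

lemma self_subset_barCone {σ : Set (Fin n → ℝ)} (hσ : σ ∈ maxCones Δ) :
    σ ⊆ barCone Δ P σ :=
  subset_barCone hσ Relation.ReflTransGen.refl

lemma barCone_eq_of_simRel {σ τ : Set (Fin n → ℝ)} (hsim : simRel Δ P σ τ) :
    barCone Δ P σ = barCone Δ P τ := by
  have hset : {υ | υ ∈ maxCones Δ ∧ simRel Δ P σ υ} = {υ | υ ∈ maxCones Δ ∧ simRel Δ P τ υ} := by
    ext υ
    exact ⟨fun hυ => ⟨hυ.1, (simRel_symm hsim).trans hυ.2⟩,
      fun hυ => ⟨hυ.1, hsim.trans hυ.2⟩⟩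
  unfold barCone
  rw [hset]

lemma piece_subset_shadow {c : Set (Fin n → ℝ)} : piece P c ⊆ extR P '' c :=
  image_mono relint_subset'

lemma piece_nonempty {c : Set (Fin n → ℝ)} (hc : IsCone c) : (piece P c).Nonempty := by
  obtain ⟨y, hy⟩ := relint_nonempty hc
  exact ⟨extR P y, y, hy, rfl⟩

lemma piece_smul {c : Set (Fin n → ℝ)} (hc : IsCone c) {t : ℝ} (ht : 0 < t)
    {x : Fin 2 → ℝ} (hx : x ∈ piece P c) : t • x ∈ piece P c := by
  obtain ⟨y, hy, rfl⟩ := hx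
  exact ⟨t • y, relint_smul hc ht hy, map_smul _ t y⟩

lemma relint_convex {E : Type*} [NormedAddCommGroup E] [NormedSpace ℝ E] {σ : Set E}
    (h : IsCone σ) : Convex ℝ (intrinsicInterior ℝ σ) := by
  intro x hx y hy a b ha hb hab
  rcases eq_or_lt_of_le ha with rfl | ha'
  · rw [zero_smul, zero_add]
    have hb1 : b = 1 := by linarith
    rw [hb1, one_smul]; exact hy
  rcases eq_or_lt_of_le hb with rfl | hb'
  · rw [zero_smul, add_zero]
    have ha1 : a = 1 := by linarith
    rw [ha1, one_smul]; exact hx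
  exact relint_add_mem h (relint_smul h ha' hx) (relint_subset' (relint_smul h hb' hy))

lemma piece_convex {c : Set (Fin n → ℝ)} (hc : IsCone c) : Convex ℝ (piece P c) :=
  (relint_convex hc).linear_image (extR P)

lemma piece_zero_symm {c : Set (Fin n → ℝ)} (hc : IsCone c)
    (h0 : (0 : Fin 2 → ℝ) ∈ piece P c) {x : Fin 2 → ℝ} (hx : x ∈ piece P c) :
    -x ∈ piece P c := by
  obtain ⟨y₀, hy₀, hy₀e⟩ := h0
  obtain ⟨y, hy, rfl⟩ := hx
  obtain ⟨δ, hδ, hball⟩ := relint_ball hc.zero_mem hy₀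
  have hyspan : y₀ - y ∈ Submodule.span ℝ c :=
    Submodule.sub_mem _ (Submodule.subset_span (relint_subset' hy₀))
      (Submodule.subset_span (relint_subset' hy))
  set ε := δ / (2 * (‖y₀ - y‖ + 1)) with hε
  have hε0 : 0 < ε := by positivity
  have hmem : y₀ + ε • (y₀ - y) ∈ intrinsicInterior ℝ c := by
    apply hball _ (Submodule.smul_mem _ _ hyspan)
    rw [norm_smul, Real.norm_eq_abs, abs_of_pos hε0, hε]
    have h1 : ‖y₀ - y‖ < ‖y₀ - y‖ + 1 := by linarith
    have h2 : (0:ℝ) < ‖y₀ - y‖ + 1 := by positivity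
    calc δ / (2 * (‖y₀ - y‖ + 1)) * ‖y₀ - y‖
        < δ / (2 * (‖y₀ - y‖ + 1)) * (‖y₀ - y‖ + 1) := by
          apply mul_lt_mul_of_pos_left h1 (by positivity)
      _ = δ / 2 := by field_simp
      _ < δ := by linarith
  have himg : extR P (y₀ + ε • (y₀ - y)) = -(ε • extR P y) := by
    rw [map_add, map_smul, map_sub, hy₀e]
    simp
  have hres : -(ε • extR P y) ∈ piece P c := ⟨_, hmem, himg⟩
  have := piece_smul hc (inv_pos.2 hε0) hres
  rwa [smul_neg, inv_smul_smul₀ (ne_of_gt hε0)] at this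

lemma piece_dir {c : Set (Fin n → ℝ)} (hc : IsCone c)
    (hspan : Submodule.span ℝ (extR P '' c) = ⊤)
    {m : Fin 2 → ℝ} (hm : m ∈ piece P c) (w : Fin 2 → ℝ) :
    ∃ ε : ℝ, 0 < ε ∧ ∀ t : ℝ, |t| < ε → m + t • w ∈ piece P c := by
  obtain ⟨ym, hym, rfl⟩ := hm
  have hmap : Submodule.map (extR P) (Submodule.span ℝ c) = ⊤ := by
    rw [← Submodule.span_image]; exact hspan
  have hw : w ∈ Submodule.map (extR P) (Submodule.span ℝ c) := by rw [hmap]; trivial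
  obtain ⟨ρ, hρ, hρw⟩ := hw
  obtain ⟨δ, hδ, hball⟩ := relint_ball hc.zero_mem hym
  refine ⟨δ/(‖ρ‖+1), by positivity, fun t ht => ?_⟩
  refine ⟨ym + t • ρ, hball _ (Submodule.smul_mem _ _ hρ) ?_, by rw [map_add, map_smul, hρw]⟩
  rw [norm_smul, Real.norm_eq_abs]
  have hρ1 : (0:ℝ) < ‖ρ‖ + 1 := by positivity
  calc |t| * ‖ρ‖ ≤ |t| * (‖ρ‖+1) := by nlinarith [abs_nonneg t]
    _ < (δ/(‖ρ‖+1)) * (‖ρ‖+1) := by apply mul_lt_mul_of_pos_right ht (by positivity)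
    _ = δ := by field_simp

lemma parent_relint_meet {c τ : Set (Fin n → ℝ)} (hc : IsCone c) (hτ : IsCone τ)
    (hsub : c ⊆ τ) (hspan : Submodule.span ℝ (extR P '' c) = ⊤) :
    (piece P c ∩ piece P τ).Nonempty := by
  have h1 : intrinsicInterior ℝ (extR P '' c) ⊆ piece P c := relint_image_superset hc
  have h2 : intrinsicInterior ℝ (extR P '' c) ⊆ intrinsicInterior ℝ (extR P '' τ) := by
    intro w hw
    rw [mem_relint (isCone_image _ hc).zero_mem] at hw
    rw [mem_relint (isCone_image _ hτ).zero_mem]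
    obtain ⟨hws, δ, hδ, hb⟩ := hw
    exact ⟨image_mono hsub hws, δ, hδ,
      fun v _ hvn => image_mono hsub (hb v (by rw [hspan]; trivial) hvn)⟩
  have h3 : intrinsicInterior ℝ (extR P '' τ) ⊆ piece P τ := relint_image_superset hτ
  obtain ⟨w, hw⟩ := relint_nonempty (isCone_image (extR P) hc)
  exact ⟨w, h1 hw, h3 (h2 hw)⟩

lemma walk_extract {a b : Set (Fin n → ℝ)} (z : Fin 2 → ℝ)
    (hchain : simRel Δ P a b) (haΔ : a ∈ Δ)
    {α : Fin 2 → ℝ} (hα : α ∈ piece P a) (hαneg : det2 z α < 0) :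
    ∀ β : Fin 2 → ℝ, β ∈ piece P b → 0 ≤ det2 z β →
    ∃ c ∈ Δ, simRel Δ P a c ∧ ∃ u v : Fin 2 → ℝ, u ∈ piece P c ∧ v ∈ piece P c ∧
      det2 z u < 0 ∧ 0 ≤ det2 z v := by
  rw [simRel_eq] at hchain
  induction hchain with
  | refl =>
    intro β hβ hβpos
    exact ⟨a, haΔ, Relation.ReflTransGen.refl, α, β, hα, hβ, hαneg, hβpos⟩
  | @tail b' c _ hstep ih =>
    intro β hβ hβpos
    obtain ⟨hbΔ, hcΔ, γ, hγb, hγc⟩ := hstep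
    by_cases hs : det2 z γ < 0
    · refine ⟨c, hcΔ, ?_, γ, β, hγc, hβ, hs, hβpos⟩
      rw [simRel_eq]
      exact Relation.ReflTransGen.tail (by assumption) ⟨hbΔ, hcΔ, γ, hγb, hγc⟩
    · push_neg at hs
      exact ih γ hγb hs

lemma crossing_point {K : Set (Fin 2 → ℝ)} (hconv : Convex ℝ K) {z u v : Fin 2 → ℝ}
    (hu : u ∈ K) (hv : v ∈ K) (hun : det2 z u < 0) (hvp : 0 ≤ det2 z v) :
    ∃ m ∈ K, det2 z m = 0 := by
  set A := det2 z u with hA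
  set B := det2 z v with hB
  have hBA : 0 < B - A := by simp only [hA, hB]; linarith
  set t := B / (B - A) with ht
  have ht0 : 0 ≤ t := by positivity
  have ht1 : t ≤ 1 := by
    rw [ht, div_le_one hBA]; linarith
  refine ⟨t • u + (1 - t) • v, hconv hu hv ht0 (by linarith) (by ring), ?_⟩
  rw [det2_add_right, det2_smul_right, det2_smul_right, ← hA, ← hB, ht]
  field_simp
  ring

end Walk

/-! ### support lemmas for the planar geometry -/

section Support

lemma det2_smul_left (t : ℝ) (z u : Fin 2 → ℝ) : det2 (t • z) u = t * det2 z u := by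
  simp [det2]; ring

lemma det2_zero_right (z : Fin 2 → ℝ) : det2 z 0 = 0 := by simp [det2]

lemma det2_lcomb (z : Fin 2 → ℝ) (l : List (ℝ × (Fin 2 → ℝ))) :
    det2 z (lcomb l) = (l.map fun p => p.1 * det2 z p.2).sum := by
  induction l with
  | nil => simp [lcomb_nil, det2_zero_right]
  | cons p l ih =>
    rw [lcomb_cons, det2_add_right, det2_smul_right, ih, List.map_cons, List.sum_cons]

lemma list_sum_zero_of_nonneg {l : List ℝ} (h : ∀ r ∈ l, 0 ≤ r) (hs : l.sum = 0) :
    ∀ r ∈ l, r = 0 := by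
  induction l with
  | nil => intro r hr; simp at hr
  | cons a l ih =>
    rw [List.sum_cons] at hs
    have ha : 0 ≤ a := h a (by simp)
    have hl : 0 ≤ l.sum := List.sum_nonneg (fun r hr => h r (by simp [hr]))
    have ha0 : a = 0 := by linarith
    have hls : l.sum = 0 := by linarith
    intro r hr
    rcases List.mem_cons.1 hr with rfl | hr'
    · exact ha0
    · exact ih (fun r hr => h r (by simp [hr])) hls r hr'

lemma lcomb_sign {z : Fin 2 → ℝ} {l : List (ℝ × (Fin 2 → ℝ))}
    (hc : ∀ p ∈ l, 0 ≤ p.1) (hneg : det2 z (lcomb l) < 0) :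
    ∃ p ∈ l, det2 z p.2 < 0 := by
  induction l with
  | nil => simp [lcomb_nil, det2_zero_right] at hneg
  | cons p l ih =>
    rw [lcomb_cons, det2_add_right, det2_smul_right] at hneg
    by_cases h1 : det2 z (lcomb l) < 0
    · obtain ⟨q, hq, hq'⟩ := ih (fun q hq => hc q (by simp [hq]))  h1
      exact ⟨q, by simp [hq], hq'⟩
    · push_neg at h1
      have hp1 : 0 ≤ p.1 := hc p (by simp)
      have : p.1 * det2 z p.2 < 0 := by linarith
      have : det2 z p.2 < 0 := by
        by_contra hcon
        push_neg at hcon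
        nlinarith
      exact ⟨p, by simp, this⟩

/-- extraction of a positive-ray generator -/
lemma extract_pos {x : Fin 2 → ℝ} (hx0 : x ≠ 0) :
    ∀ l : List (ℝ × (Fin 2 → ℝ)), (∀ p ∈ l, 0 ≤ p.1) →
    (∀ p ∈ l, p.1 = 0 ∨ ∃ t : ℝ, p.2 = t • x) →
    ∀ c : ℝ, 0 < c → lcomb l = c • x →
    ∃ p ∈ l, 0 < p.1 ∧ ∃ t : ℝ, 0 < t ∧ p.2 = t • x := by
  intro l
  induction l with
  | nil =>
    intro _ _ c hc hl
    rw [lcomb_nil] at hl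
    exact absurd (smul_eq_zero.mp hl.symm) (by
      push_neg
      exact ⟨ne_of_gt hc, hx0⟩)
  | cons p l ih =>
    intro hnn hmp c hc hl
    rcases hmp p (by simp) with hz | ⟨t, ht⟩
    · rw [lcomb_cons, hz, zero_smul, zero_add] at hl
      obtain ⟨q, hq, hres⟩ := ih (fun q hq => hnn q (by simp [hq]))
        (fun q hq => hmp q (by simp [hq])) c hc hl
      exact ⟨q, by simp [hq], hres⟩
    · by_cases hpt : 0 < p.1 ∧ 0 < t
      · exact ⟨p, by simp, hpt.1, t, hpt.2, ht⟩
      · have hp1 : 0 ≤ p.1 := hnn p (by simp)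
        have hptle : p.1 * t ≤ 0 := by
          rcases (not_and_or.mp hpt) with h | h
          · push_neg at h
            have : p.1 = 0 := le_antisymm h hp1
            rw [this]; simp
          · push_neg at h
            exact mul_nonpos_of_nonneg_of_nonpos hp1 h
        rw [lcomb_cons, ht] at hl
        have hl' : lcomb l = (c - p.1 * t) • x := by
          rw [sub_smul, ← hl, smul_smul]
          abel
        obtain ⟨q, hq, hres⟩ := ih (fun q hq => hnn q (by simp [hq]))
          (fun q hq => hmp q (by simp [hq])) (c - p.1 * t) (by linarith) hl'
        exact ⟨q, by simp [hq], hres⟩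

section WithP

variable {n : ℕ} {Δ : Set (Set (Fin n → ℝ))} {P : (Fin n → ℤ) →ₗ[ℤ] (Fin 2 → ℤ)}

lemma piece_add_shadow {c : Set (Fin n → ℝ)} (hc : IsCone c) {x y : Fin 2 → ℝ}
    (hx : x ∈ piece P c) (hy : y ∈ extR P '' c) : x + y ∈ piece P c := by
  obtain ⟨a, ha, rfl⟩ := hx
  obtain ⟨b, hb, rfl⟩ := hy
  exact ⟨a + b, relint_add_mem hc ha hb, map_add _ a b⟩

lemma shadow_to_piece_sign {τ : Set (Fin n → ℝ)} (hτ : IsCone τ) {u z : Fin 2 → ℝ}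
    (hu : u ∈ extR P '' τ) (hun : det2 z u < 0) :
    ∃ α ∈ piece P τ, det2 z α < 0 := by
  obtain ⟨y, hy, rfl⟩ := hu
  obtain ⟨ρ, hρ⟩ := relint_nonempty hτ
  set dd := det2 z (extR P ρ) with hdd
  by_cases hd : dd ≤ 0
  · refine ⟨extR P ρ + extR P y, ?_, ?_⟩
    · rw [← map_add]
      exact ⟨ρ + y, relint_add_mem hτ hρ hy, rfl⟩
    · rw [det2_add_right]
      have hy1 : det2 z (extR P y) < 0 := hun
      linarith
  · push_neg at hd
    set ε := (- det2 z (extR P y)) / (2 * dd) with hε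
    have hε0 : 0 < ε := by
      apply div_pos (by linarith) (by linarith)
    refine ⟨extR P y + ε • extR P ρ, ?_, ?_⟩
    · rw [← map_smul, ← map_add]
      exact ⟨y + ε • ρ, relint_combo hτ hy hρ hε0, rfl⟩
    · rw [det2_add_right, det2_smul_right, ← hdd, hε]
      have h2dd : (2:ℝ) * dd ≠ 0 := by linarith
      have hkey : -det2 z ((extR P) y) / (2 * dd) * dd = -det2 z ((extR P) y)/2 := by
        field_simp
      rw [hkey]
      linarith

lemma relint_1d {E : Type*} [NormedAddCommGroup E] [NormedSpace ℝ E] {σ : Set E}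
    (h : IsCone σ) {x : E} (hx : x ∈ σ) (hx0 : x ≠ 0)
    (hall : ∀ y ∈ σ, ∃ t : ℝ, y = t • x) : x ∈ intrinsicInterior ℝ σ := by
  rw [mem_relint h.zero_mem]
  have hxn : 0 < ‖x‖ := norm_pos_iff.2 hx0
  refine ⟨hx, ‖x‖/2, by positivity, ?_⟩
  intro v hv hvn
  have hspan : Submodule.span ℝ σ ≤ Submodule.span ℝ ({x} : Set E) := by
    apply Submodule.span_le.2
    intro y hy
    obtain ⟨t, ht⟩ := hall y hy
    exact (Submodule.mem_span_singleton).2 ⟨t, ht.symm⟩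
  obtain ⟨t, ht⟩ := (Submodule.mem_span_singleton).1 (hspan hv)
  have htb : |t| < 1/2 := by
    have hns : ‖t • x‖ = |t| * ‖x‖ := by rw [norm_smul, Real.norm_eq_abs]
    rw [← ht, hns] at hvn
    by_contra hcon
    push_neg at hcon
    nlinarith
  have : x + v = (1 + t) • x := by rw [← ht, add_smul, one_smul]
  rw [this]
  apply h.smul_mem _ hx
  have := abs_lt.1 htb
  linarith [this.1]

lemma relint_mono_top {E : Type*} [NormedAddCommGroup E] [NormedSpace ℝ E]
    {K C : Set E} (hK0 : (0:E) ∈ K) (hC0 : (0:E) ∈ C) (hKC : K ⊆ C)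
    (hspan : Submodule.span ℝ K = ⊤) :
    intrinsicInterior ℝ K ⊆ intrinsicInterior ℝ C := by
  intro w hw
  rw [mem_relint hK0] at hw
  rw [mem_relint hC0]
  obtain ⟨hwK, δ, hδ, hb⟩ := hw
  exact ⟨hKC hwK, δ, hδ, fun v _ hvn => hKC (hb v (by rw [hspan]; trivial) hvn)⟩

lemma sum_relint_cone2 {x y : Fin 2 → ℝ} (hD : det2 x y ≠ 0) :
    x + y ∈ intrinsicInterior ℝ (coneHull {x, y}) := by
  have hcone := isCone_coneHull ({x, y} : Set (Fin 2 → ℝ))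
  rw [mem_relint hcone.zero_mem]
  have hxK : x ∈ coneHull {x, y} := subset_coneHull _ (by simp)
  have hyK : y ∈ coneHull {x, y} := subset_coneHull _ (by simp)
  refine ⟨hcone.add_mem hxK hyK, |det2 x y| / (2 * (‖x‖ + ‖y‖) + 1), ?_, ?_⟩
  · have : 0 < |det2 x y| := abs_pos.2 hD
    positivity
  · intro v _ hvn
    set a := det2 v y / det2 x y with ha
    set b := det2 x v / det2 x y with hb
    have hv : v = a • x + b • y := det2_cramer hD v
    have hDpos : 0 < |det2 x y| := abs_pos.2 hD
    have hnorm : (0:ℝ) ≤ ‖x‖ + ‖y‖ := by positivity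
    have hab : |a| < 1 ∧ |b| < 1 := by
      constructor
      · rw [ha, abs_div]
        rw [div_lt_one hDpos]
        calc |det2 v y| ≤ 2 * ‖v‖ * ‖y‖ := abs_det2_le v y
          _ < |det2 x y| := by
            have h1 : ‖v‖ < |det2 x y| / (2 * (‖x‖ + ‖y‖) + 1) := hvn
            have h2 : (0:ℝ) < 2 * (‖x‖ + ‖y‖) + 1 := by positivity
            have h3 : ‖v‖ * (2 * (‖x‖ + ‖y‖) + 1) < |det2 x y| := (lt_div_iff₀ h2).1 h1
            nlinarith [norm_nonneg v, norm_nonneg x, norm_nonneg y]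
      · rw [hb, abs_div]
        rw [div_lt_one hDpos]
        calc |det2 x v| ≤ 2 * ‖x‖ * ‖v‖ := abs_det2_le x v
          _ < |det2 x y| := by
            have h1 : ‖v‖ < |det2 x y| / (2 * (‖x‖ + ‖y‖) + 1) := hvn
            have h2 : (0:ℝ) < 2 * (‖x‖ + ‖y‖) + 1 := by positivity
            have h3 : ‖v‖ * (2 * (‖x‖ + ‖y‖) + 1) < |det2 x y| := (lt_div_iff₀ h2).1 h1
            nlinarith [norm_nonneg v, norm_nonneg x, norm_nonneg y]
    have hgoal : x + y + v = (1 + a) • x + (1 + b) • y := by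
      rw [hv, add_smul, add_smul, one_smul, one_smul]
      abel
    rw [hgoal]
    apply hcone.add_mem
    · exact hcone.smul_mem (by linarith [abs_lt.1 hab.1]) hxK
    · exact hcone.smul_mem (by linarith [abs_lt.1 hab.2]) hyK

/-- representation of elements of the shadow of a `barCone` -/
lemma D_rep {σ : Set (Fin n → ℝ)} {x : Fin 2 → ℝ}
    (hx : x ∈ extR P '' barCone Δ P σ) :
    ∃ l : List (ℝ × (Fin 2 → ℝ)),
      (∀ p ∈ l, 0 ≤ p.1 ∧ ∃ τ, τ ∈ maxCones Δ ∧ simRel Δ P σ τ ∧ p.2 ∈ extR P '' τ) ∧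
      x = lcomb l := by
  rw [show extR P '' barCone Δ P σ =
      coneHull (extR P '' ⋃₀ {τ | τ ∈ maxCones Δ ∧ simRel Δ P σ τ}) from
    image_coneHull _ _] at hx
  rw [coneHull_eq_lcomb] at hx
  obtain ⟨l, hl, rfl⟩ := hx
  refine ⟨l, fun p hp => ⟨(hl p hp).1, ?_⟩, rfl⟩
  obtain ⟨y, hy, hye⟩ := (hl p hp).2
  obtain ⟨τ, hτ, hyτ⟩ := hy
  exact ⟨τ, hτ.1, hτ.2, y, hyτ, hye⟩

lemma shadow_subset_D {σ τ : Set (Fin n → ℝ)} (hτ : τ ∈ maxCones Δ)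
    (hsim : simRel Δ P σ τ) : extR P '' τ ⊆ extR P '' barCone Δ P σ :=
  image_mono (subset_barCone hτ hsim)

lemma noline_of_hLin (hΔfin : Δ.Finite) (hΔcone : ∀ c ∈ Δ, IsCone c)
    {VS : Set (Fin 2 → ℝ)}
    (hLin : ∀ υ ∈ maxCones Δ, ∀ x : Fin 2 → ℝ, x ∈ extR P '' barCone Δ P υ →
      -x ∈ extR P '' barCone Δ P υ → x ∈ VS)
    {c : Set (Fin n → ℝ)} (hc : c ∈ Δ) {u : Fin 2 → ℝ}
    (hu : u ∈ piece P c) (hnu : -u ∈ piece P c) : u ∈ VS := by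
  obtain ⟨τ, hτ, hsub⟩ := exists_maxCone hΔfin hc
  have hshadow : extR P '' c ⊆ extR P '' barCone Δ P τ :=
    (image_mono hsub).trans (shadow_subset_D hτ Relation.ReflTransGen.refl)
  exact hLin τ hτ u (hshadow (piece_subset_shadow hu))
    (hshadow (piece_subset_shadow hnu))

end WithP

end Support

/-! ### the per-class walk output -/

section ClassOutput

variable {n : ℕ} {Δ : Set (Set (Fin n → ℝ))} {P : (Fin n → ℤ) →ₗ[ℤ] (Fin 2 → ℤ)}

lemma det2_neg_left (z u : Fin 2 → ℝ) : det2 (-z) u = - det2 z u := by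
  simp [det2]; ring

/-- in the one-sided case the whole shadow lies on the line spanned by `z` -/
lemma oneSided_degenerate {σ : Set (Fin n → ℝ)}
    {z : Fin 2 → ℝ}
    (hzD : z ∈ intrinsicInterior ℝ (extR P '' barCone Δ P σ))
    (hside : (∀ p ∈ extR P '' barCone Δ P σ, 0 ≤ det2 z p) ∨
             (∀ p ∈ extR P '' barCone Δ P σ, det2 z p ≤ 0)) :
    ∀ p ∈ extR P '' barCone Δ P σ, det2 z p = 0 := by
  set D := extR P '' barCone Δ P σ with hD
  have hDcone : IsCone D := isCone_image _ (barCone_isCone σ)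
  intro p hp
  rw [mem_relint hDcone.zero_mem] at hzD
  obtain ⟨hzDD, δ, hδ, hb⟩ := hzD
  set ε := δ / (2 * (‖p‖ + 1)) with hε
  have hε0 : 0 < ε := by positivity
  have hpspan : p ∈ Submodule.span ℝ D := Submodule.subset_span hp
  have hnorm : ‖ε • p‖ < δ := by
    rw [norm_smul, Real.norm_eq_abs, abs_of_pos hε0, hε]
    have h1 : ‖p‖ < ‖p‖ + 1 := by linarith
    have h2 : (0:ℝ) < ‖p‖ + 1 := by positivity
    calc δ / (2 * (‖p‖ + 1)) * ‖p‖ < δ / (2 * (‖p‖ + 1)) * (‖p‖ + 1) := by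
          apply mul_lt_mul_of_pos_left h1 (by positivity)
      _ = δ / 2 := by field_simp
      _ < δ := by linarith
  have hplus : z + ε • p ∈ D := hb _ (Submodule.smul_mem _ _ hpspan) hnorm
  have hminus : z + (-(ε • p)) ∈ D := by
    apply hb _ (Submodule.neg_mem _ (Submodule.smul_mem _ _ hpspan))
    rwa [norm_neg]
  have hv1 : det2 z (z + ε • p) = ε * det2 z p := by
    rw [det2_add_right, det2_self, det2_smul_right, zero_add]
  have hv2 : det2 z (z + (-(ε • p))) = -(ε * det2 z p) := by
    rw [det2_add_right, det2_self, det2_neg_right, det2_smul_right, zero_add]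
  rcases hside with hs | hs
  · have h1 := hs _ hplus
    have h2 := hs _ hminus
    rw [hv1] at h1
    rw [hv2] at h2
    nlinarith
  · have h1 := hs _ hplus
    have h2 := hs _ hminus
    rw [hv1] at h1
    rw [hv2] at h2
    nlinarith

lemma class_output (hΔcone : ∀ c ∈ Δ, IsCone c) (hΔfin : Δ.Finite)
    {σ : Set (Fin n → ℝ)} (hσ : σ ∈ maxCones Δ)
    {z : Fin 2 → ℝ} (hz : z ≠ 0)
    (hzD : z ∈ intrinsicInterior ℝ (extR P '' barCone Δ P σ))
    (hnoline : ∀ c ∈ Δ, simRel Δ P σ c → ∀ u : Fin 2 → ℝ,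
      u ∈ piece P c → -u ∈ piece P c → det2 z u = 0) :
    ∃ c ∈ Δ, simRel Δ P σ c ∧ ∃ t : ℝ, t ≠ 0 ∧
      t • z ∈ piece P c ∧ t • z ∈ extR P '' barCone Δ P σ := by
  set D := extR P '' barCone Δ P σ with hD
  have hDcone : IsCone D := isCone_image _ (barCone_isCone σ)
  have hzDD : z ∈ D := relint_subset' hzD
  by_cases hA : (∃ p ∈ D, det2 z p < 0) ∧ (∃ q ∈ D, 0 < det2 z q)
  · -- walk case
    obtain ⟨⟨p, hp, hpneg⟩, ⟨q, hq, hqpos⟩⟩ := hA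
    obtain ⟨lp, hlp, hplc⟩ := D_rep hp
    obtain ⟨lq, hlq, hqlc⟩ := D_rep hq
    rw [hplc] at hpneg
    obtain ⟨pp, hppl, hppneg⟩ := lcomb_sign (fun r hr => (hlp r hr).1) hpneg
    obtain ⟨τm, hτm, hsimm, huτm⟩ := (hlp pp hppl).2
    have hqneg : det2 (-z) (lcomb lq) < 0 := by
      rw [det2_neg_left]
      rw [hqlc] at hqpos
      linarith
    obtain ⟨qq, hqql, hqqneg⟩ := lcomb_sign (fun r hr => (hlq r hr).1) hqneg
    obtain ⟨τp, hτp, hsimp, huτp⟩ := (hlq qq hqql).2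
    have hqqpos : 0 < det2 z qq.2 := by
      rw [det2_neg_left] at hqqneg; linarith
    -- lift to pieces
    obtain ⟨α, hα, hαneg⟩ := shadow_to_piece_sign (hΔcone τm hτm.1) huτm hppneg
    have hβneg : det2 (-z) qq.2 < 0 := hqqneg
    obtain ⟨β, hβ, hβneg'⟩ := shadow_to_piece_sign (hΔcone τp hτp.1) huτp hβneg
    have hβpos : 0 ≤ det2 z β := by
      rw [det2_neg_left] at hβneg'; linarith
    -- the walk
    have hchain : simRel Δ P τm τp := (simRel_symm hsimm).trans hsimp
    obtain ⟨c, hc, hsimc, u, v, hu, hv, hun, hvp⟩ :=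
      walk_extract z hchain hτm.1 hα hαneg β hβ hβpos
    have hsimσc : simRel Δ P σ c := hsimm.trans hsimc
    obtain ⟨m, hm, hmz⟩ := crossing_point (piece_convex (hΔcone c hc)) hu hv hun hvp
    obtain ⟨t, htz⟩ := (det2_eq_zero_iff hz).1 hmz
    by_cases ht0 : t = 0
    · exfalso
      have hm0 : (0 : Fin 2 → ℝ) ∈ piece P c := by
        rw [ht0, zero_smul] at htz
        rwa [htz] at hm
      have := hnoline c hc hsimσc u hu (piece_zero_symm (hΔcone c hc) hm0 hu)
      exact absurd this (ne_of_lt hun)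
    · have hdet : det2 m u ≠ 0 := by
        rw [htz, det2_smul_left]
        exact mul_ne_zero ht0 (ne_of_lt hun)
      have hspan : Submodule.span ℝ (extR P '' c) = ⊤ :=
        span_top_of_det2 (piece_subset_shadow hm) (piece_subset_shadow hu) hdet
      obtain ⟨τc, hτc, hsubc⟩ := exists_maxCone hΔfin hc
      have hmeet := parent_relint_meet (P := P) (hΔcone c hc) (hΔcone τc hτc.1) hsubc hspan
      have hsimστc : simRel Δ P σ τc :=
        simRel_merge hsimσc Relation.ReflTransGen.refl hc hτc.1 hmeet
      refine ⟨c, hc, hsimσc, t, ht0, ?_, ?_⟩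
      · rwa [htz] at hm
      · rw [← htz]
        exact shadow_subset_D hτc hsimστc (image_mono hsubc (piece_subset_shadow hm))
  · -- one-sided case
    have hside : (∀ p ∈ D, 0 ≤ det2 z p) ∨ (∀ p ∈ D, det2 z p ≤ 0) := by
      rcases not_and_or.mp hA with h | h
      · push_neg at h
        left; exact h
      · push_neg at h
        right; exact h
    have hdeg := oneSided_degenerate hzD hside
    obtain ⟨l, hl, hlc⟩ := D_rep hzDD
    have hMP : ∀ r ∈ l, r.1 = 0 ∨ ∃ t : ℝ, r.2 = t • z := by
      intro r hr
      right
      obtain ⟨τ, hτ, hsim, hrτ⟩ := (hl r hr).2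
      exact (det2_eq_zero_iff hz).1 (hdeg _ (shadow_subset_D hτ hsim hrτ))
    obtain ⟨r, hrl, hr1, t, ht, hrz⟩ :=
      extract_pos hz l (fun r hr => (hl r hr).1) hMP 1 one_pos (by rw [one_smul, ← hlc])
    obtain ⟨τ, hτ, hsim, hrτ⟩ := (hl r hrl).2
    have hτcone : IsCone (extR P '' τ) := isCone_image _ (hΔcone τ hτ.1)
    have htzne : t • z ≠ 0 := by
      intro hcon
      rcases smul_eq_zero.mp hcon with h | h
      · exact (ne_of_gt ht) h
      · exact hz h
    have hall : ∀ y ∈ extR P '' τ, ∃ s : ℝ, y = s • (t • z) := by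
      intro y hy
      obtain ⟨s', hs'⟩ := (det2_eq_zero_iff hz).1 (hdeg _ (shadow_subset_D hτ hsim hy))
      exact ⟨s' / t, by rw [hs', smul_smul]; congr 1; field_simp⟩
    have hrel : t • z ∈ intrinsicInterior ℝ (extR P '' τ) := by
      apply relint_1d hτcone (hrz ▸ hrτ) htzne hall
    refine ⟨τ, hτ.1, hsim, t, ne_of_gt ht, ?_, ?_⟩
    · exact relint_image_superset (hΔcone τ hτ.1) hrel
    · exact shadow_subset_D hτ hsim (hrz ▸ hrτ)

end ClassOutput

/-! ### the planar geometry, case V = 0 -/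

section MonsterOne

variable {n : ℕ} {Δ : Set (Set (Fin n → ℝ))} {P : (Fin n → ℤ) →ₗ[ℤ] (Fin 2 → ℤ)}

lemma classes_relint_disjoint (hΔcone : ∀ c ∈ Δ, IsCone c) (hΔfin : Δ.Finite)
    (hLin0 : ∀ υ ∈ maxCones Δ, ∀ x : Fin 2 → ℝ, x ∈ extR P '' barCone Δ P υ →
      -x ∈ extR P '' barCone Δ P υ → x = 0)
    {σ τ : Set (Fin n → ℝ)} (hσ : σ ∈ maxCones Δ) (hτ : τ ∈ maxCones Δ)
    (hnsim : ¬ simRel Δ P σ τ) {z : Fin 2 → ℝ}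
    (hz1 : z ∈ intrinsicInterior ℝ (extR P '' barCone Δ P σ))
    (hz2 : z ∈ intrinsicInterior ℝ (extR P '' barCone Δ P τ)) : False := by
  by_cases hz : z = 0
  · subst hz
    have key : ∀ υ, υ ∈ maxCones Δ →
        (0:Fin 2 → ℝ) ∈ intrinsicInterior ℝ (extR P '' barCone Δ P υ) →
        (0 : Fin 2 → ℝ) ∈ piece P υ := by
      intro υ hυ h0
      have hDcone : IsCone (extR P '' barCone Δ P υ) := isCone_image _ (barCone_isCone υ)
      have hall0 : ∀ x ∈ extR P '' barCone Δ P υ, x = 0 := fun x hx =>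
        hLin0 υ hυ x hx (relint_zero_symm hDcone h0 hx)
      obtain ⟨w, hw⟩ := piece_nonempty (P := P) (hΔcone υ hυ.1)
      have hw0 : w = 0 := hall0 w
        (shadow_subset_D hυ Relation.ReflTransGen.refl (piece_subset_shadow hw))
      rwa [hw0] at hw
    exact hnsim (simRel_merge Relation.ReflTransGen.refl Relation.ReflTransGen.refl
      hσ.1 hτ.1 ⟨0, key σ hσ hz1, key τ hτ hz2⟩)
  · have hnoline : ∀ υ, υ ∈ maxCones Δ → ∀ c ∈ Δ, simRel Δ P υ c → ∀ u : Fin 2 → ℝ,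
        u ∈ piece P c → -u ∈ piece P c → det2 z u = 0 := by
      intro υ hυ c hc _ u hu hnu
      have := noline_of_hLin hΔfin hΔcone (VS := {0}) (fun υ' hυ' x hx hnx => hLin0 υ' hυ' x hx hnx) hc hu hnu
      rw [this]
      exact det2_zero_right z
    obtain ⟨c₁, hc₁, hsim₁, t₁, ht₁, hp₁, hD₁⟩ :=
      class_output hΔcone hΔfin hσ hz hz1 (hnoline σ hσ)
    obtain ⟨c₂, hc₂, hsim₂, t₂, ht₂, hp₂, hD₂⟩ :=
      class_output hΔcone hΔfin hτ hz hz2 (hnoline τ hτ)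
    by_cases hsame : 0 < t₁ * t₂
    · have hrat : 0 < t₂ / t₁ := by
        have he : t₂ / t₁ = (t₁*t₂)/(t₁^2) := by field_simp
        rw [he]
        have : (0:ℝ) < t₁^2 := by positivity
        positivity
      have heq : (t₂ / t₁) • (t₁ • z) = t₂ • z := by
        rw [smul_smul]; congr 1; field_simp
      have hmem : t₂ • z ∈ piece P c₁ := by
        rw [← heq]
        exact piece_smul (hΔcone c₁ hc₁) hrat hp₁
      exact hnsim (simRel_merge hsim₁ hsim₂ hc₁ hc₂ ⟨t₂ • z, hmem, hp₂⟩)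
    · have hopp : t₁ * t₂ < 0 :=
        lt_of_le_of_ne (not_lt.mp hsame) (mul_ne_zero ht₁ ht₂)
      have key : ∀ (υ : Set (Fin n → ℝ)), υ ∈ maxCones Δ →
          ∀ t : ℝ, t < 0 → t • z ∈ extR P '' barCone Δ P υ →
          z ∈ extR P '' barCone Δ P υ → False := by
        intro υ hυ t ht htm hzm
        have hDc : IsCone (extR P '' barCone Δ P υ) := isCone_image _ (barCone_isCone υ)
        have hnz : -z ∈ extR P '' barCone Δ P υ := by
          have hti : (0:ℝ) < -t⁻¹ := by
            have : t⁻¹ < 0 := inv_lt_zero.mpr ht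
            linarith
          have := hDc.smul_mem (le_of_lt hti) htm
          rwa [smul_smul, show -t⁻¹ * t = -1 from by
            rw [neg_mul, inv_mul_cancel₀ (ne_of_lt ht)], neg_one_smul] at this
        exact hz (hLin0 υ hυ z hzm hnz)
      rcases lt_or_gt_of_ne ht₁ with h1 | h1
      · exact key σ hσ t₁ h1 hD₁ (relint_subset' hz1)
      · have h2 : t₂ < 0 := by nlinarith
        exact key τ hτ t₂ h2 hD₂ (relint_subset' hz2)

lemma classes_face (hΔcone : ∀ c ∈ Δ, IsCone c) (hΔfin : Δ.Finite)
    (hLin0 : ∀ υ ∈ maxCones Δ, ∀ x : Fin 2 → ℝ, x ∈ extR P '' barCone Δ P υ →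
      -x ∈ extR P '' barCone Δ P υ → x = 0)
    {σ τ : Set (Fin n → ℝ)} (hσ : σ ∈ maxCones Δ) (hτ : τ ∈ maxCones Δ) :
    IsFaceOf (extR P '' barCone Δ P σ ∩ extR P '' barCone Δ P τ)
      (extR P '' barCone Δ P σ) := by
  have hC₁ : IsCone (extR P '' barCone Δ P σ) := isCone_image _ (barCone_isCone σ)
  have hC₂ : IsCone (extR P '' barCone Δ P τ) := isCone_image _ (barCone_isCone τ)
  by_cases hsim : simRel Δ P σ τ
  · rw [barCone_eq_of_simRel hsim, Set.inter_self]
    exact isFaceOf_refl hC₂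
  · have key : ∀ x ∈ extR P '' barCone Δ P σ, ∀ y ∈ extR P '' barCone Δ P σ,
        x + y ∈ extR P '' barCone Δ P τ → x ∈ extR P '' barCone Δ P τ := by
      intro x hx y hy hxy
      by_cases hx0 : x = 0
      · rw [hx0]; exact hC₂.zero_mem
      by_cases hy0 : y = 0
      · rw [hy0, add_zero] at hxy; exact hxy
      by_cases hdep : det2 x y = 0
      · obtain ⟨s, hs⟩ := (det2_eq_zero_iff hx0).1 hdep
        rcases le_or_gt 0 s with hs0 | hsneg
        · have h1s : (0:ℝ) < 1 + s := by linarith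
          have hsum : x + y = (1+s) • x := by rw [hs, add_smul, one_smul]
          have hxe : x = (1/(1+s)) • (x+y) := by
            rw [hsum, smul_smul, one_div, inv_mul_cancel₀ (ne_of_gt h1s), one_smul]
          rw [hxe]
          exact hC₂.smul_mem (by positivity) hxy
        · exfalso
          have hny : -y ∈ extR P '' barCone Δ P σ := by
            rw [hs, ← neg_smul]
            exact hC₁.smul_mem (by linarith) hx
          exact hy0 (hLin0 σ hσ y hy hny)
      · exfalso
        have hKsub : coneHull {x, y} ⊆ extR P '' barCone Δ P σ := by
          apply coneHull_min hC₁
          intro w hw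
          rcases hw with rfl | hw
          · exact hx
          · rw [Set.mem_singleton_iff] at hw; rw [hw]; exact hy
        have hKspan : Submodule.span ℝ (coneHull {x, y}) = ⊤ := by
          apply span_top_of_det2 (subset_coneHull _ (by simp))
            (subset_coneHull _ (by simp : y ∈ ({x, y} : Set (Fin 2 → ℝ)))) hdep
        have hzz : x + y ∈ intrinsicInterior ℝ (extR P '' barCone Δ P σ) :=
          relint_mono_top (isCone_coneHull _).zero_mem hC₁.zero_mem hKsub hKspan
            (sum_relint_cone2 hdep)
        obtain ⟨w₂, hw₂⟩ := relint_nonempty hC₂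
        set zz := x + y with hzzdef
        by_cases hd0 : w₂ - zz = 0
        · have hzw : zz = w₂ := (sub_eq_zero.mp hd0).symm
          refine classes_relint_disjoint hΔcone hΔfin hLin0 hσ hτ hsim hzz ?_
          rw [hzw]; exact hw₂
        · obtain ⟨δ, hδ, hball⟩ := relint_ball hC₁.zero_mem hzz
          have hdn : 0 < ‖w₂ - zz‖ := norm_pos_iff.2 hd0
          set t := min (1/2) (δ/(2*‖w₂ - zz‖)) with htdef
          have ht0 : 0 < t := by
            apply lt_min (by norm_num) (by positivity)
          have ht12 : t ≤ 1/2 := min_le_left _ _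
          have htδ : t * ‖w₂ - zz‖ < δ := by
            have h1 : t ≤ δ/(2*‖w₂ - zz‖) := min_le_right _ _
            calc t * ‖w₂ - zz‖ ≤ (δ/(2*‖w₂ - zz‖)) * ‖w₂ - zz‖ := by
                  apply mul_le_mul_of_nonneg_right h1 (norm_nonneg _)
              _ = δ/2 := by field_simp
              _ < δ := by linarith
          have hspanC : Submodule.span ℝ (extR P '' barCone Δ P σ) = ⊤ := by
            rw [eq_top_iff]
            rw [← hKspan]
            exact Submodule.span_mono hKsub
          have hin1 : zz + t • (w₂ - zz) ∈
              intrinsicInterior ℝ (extR P '' barCone Δ P σ) := by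
            apply hball _ (by rw [hspanC]; trivial)
            rw [norm_smul, Real.norm_eq_abs, abs_of_pos ht0]
            exact htδ
          have hin2 : zz + t • (w₂ - zz) ∈
              intrinsicInterior ℝ (extR P '' barCone Δ P τ) := by
            have heq : zz + t • (w₂ - zz) = (1-t) • zz + t • w₂ := by
              rw [smul_sub, sub_smul, one_smul]
              abel
            rw [heq]
            have h1 : (1-t) • zz ∈ extR P '' barCone Δ P τ :=
              hC₂.smul_mem (by linarith) hxy
            have := relint_add_mem hC₂ (relint_smul hC₂ ht0 hw₂) h1
            rwa [add_comm] at this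
          exact classes_relint_disjoint hΔcone hΔfin hLin0 hσ hτ hsim hin1 hin2
    refine ⟨isCone_inter hC₁ hC₂, inter_subset_left, ?_⟩
    intro x hx y hy hxy
    refine ⟨⟨hx, key x hx y hy hxy.2⟩, hy, key y hy x hx ?_⟩
    rw [add_comm]
    exact hxy.2

end MonsterOne

/-! ### the planar geometry, case dim V ≤ 1 -/

section MonsterTwo

variable {n : ℕ} {Δ : Set (Set (Fin n → ℝ))} {P : (Fin n → ℤ) →ₗ[ℤ] (Fin 2 → ℤ)}

lemma list_sum_nonpos {l : List ℝ} (h : ∀ r ∈ l, r ≤ 0) : l.sum ≤ 0 := by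
  induction l with
  | nil => simp
  | cons a l ih =>
    rw [List.sum_cons]
    have := h a (by simp)
    have := ih (fun r hr => h r (by simp [hr]))
    linarith

lemma list_sum_zero_of_nonpos {l : List ℝ} (h : ∀ r ∈ l, r ≤ 0) (hs : l.sum = 0) :
    ∀ r ∈ l, r = 0 := by
  induction l with
  | nil => intro r hr; simp at hr
  | cons a l ih =>
    rw [List.sum_cons] at hs
    have ha : a ≤ 0 := h a (by simp)
    have hl : l.sum ≤ 0 := list_sum_nonpos (fun r hr => h r (by simp [hr]))
    have ha0 : a = 0 := by linarith
    have hls : l.sum = 0 := by linarith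
    intro r hr
    rcases List.mem_cons.1 hr with rfl | hr'
    · exact ha0
    · exact ih (fun r hr => h r (by simp [hr])) hls r hr'

lemma ray_point_of_oneSided (hΔcone : ∀ c ∈ Δ, IsCone c)
    {σ₀ : Set (Fin n → ℝ)} (hσ₀ : σ₀ ∈ maxCones Δ) {x : Fin 2 → ℝ} (hx0 : x ≠ 0)
    (hx : x ∈ extR P '' barCone Δ P σ₀)
    (hside : (∀ p ∈ extR P '' barCone Δ P σ₀, 0 ≤ det2 x p) ∨
             (∀ p ∈ extR P '' barCone Δ P σ₀, det2 x p ≤ 0)) :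
    ∃ τ ∈ maxCones Δ, simRel Δ P σ₀ τ ∧ ∃ s : ℝ, 0 < s ∧ s • x ∈ extR P '' τ := by
  obtain ⟨l, hl, hlc⟩ := D_rep hx
  have hsum0 : (l.map fun p => p.1 * det2 x p.2).sum = 0 := by
    rw [← det2_lcomb, ← hlc, det2_self]
  have hterm0 : ∀ p ∈ l, p.1 * det2 x p.2 = 0 := by
    intro p hp
    have hmem : p.1 * det2 x p.2 ∈ l.map fun p => p.1 * det2 x p.2 :=
      List.mem_map_of_mem hp
    rcases hside with hs | hs
    · apply list_sum_zero_of_nonneg ?_ hsum0 _ hmem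
      intro r hr
      obtain ⟨q, hq, rfl⟩ := List.mem_map.1 hr
      obtain ⟨τ, hτ, hsim, hqτ⟩ := (hl q hq).2
      exact mul_nonneg (hl q hq).1 (hs _ (shadow_subset_D hτ hsim hqτ))
    · apply list_sum_zero_of_nonpos ?_ hsum0 _ hmem
      intro r hr
      obtain ⟨q, hq, rfl⟩ := List.mem_map.1 hr
      obtain ⟨τ, hτ, hsim, hqτ⟩ := (hl q hq).2
      exact mul_nonpos_of_nonneg_of_nonpos (hl q hq).1 (hs _ (shadow_subset_D hτ hsim hqτ))
  have hMP : ∀ p ∈ l, p.1 = 0 ∨ ∃ t : ℝ, p.2 = t • x := by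
    intro p hp
    rcases mul_eq_zero.mp (hterm0 p hp) with h | h
    · left; exact h
    · right; exact (det2_eq_zero_iff hx0).1 h
  obtain ⟨p, hpl, _, t, ht, hpx⟩ :=
    extract_pos hx0 l (fun p hp => (hl p hp).1) hMP 1 one_pos (by rw [one_smul, ← hlc])
  obtain ⟨τ, hτ, hsim, hpτ⟩ := (hl p hpl).2
  exact ⟨τ, hτ, hsim, t, ht, hpx ▸ hpτ⟩

lemma class_no_straddle (hΔcone : ∀ c ∈ Δ, IsCone c) (hΔfin : Δ.Finite)
    {V : Submodule ℝ (Fin 2 → ℝ)}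
    (hVeq : V = Submodule.span ℝ (⋃ υ ∈ maxCones Δ,
      {x | x ∈ extR P '' barCone Δ P υ ∧ -x ∈ extR P '' barCone Δ P υ}))
    {w₀ : Fin 2 → ℝ} (hVsub : ∀ v ∈ V, ∃ t : ℝ, v = t • w₀)
    {σ : Set (Fin n → ℝ)} (hσ : σ ∈ maxCones Δ) {d d' : Fin 2 → ℝ}
    (hd : d ∈ extR P '' barCone Δ P σ) (hd' : d' ∈ extR P '' barCone Δ P σ)
    (hsum : d + d' ∈ V) : d ∈ (V : Set (Fin 2 → ℝ)) := by
  have hLin : ∀ υ ∈ maxCones Δ, ∀ x : Fin 2 → ℝ, x ∈ extR P '' barCone Δ P υ →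
      -x ∈ extR P '' barCone Δ P υ → x ∈ V := by
    intro υ hυ x hx hnx
    rw [hVeq]
    exact Submodule.subset_span (Set.mem_iUnion₂.2 ⟨υ, hυ, hx, hnx⟩)
  by_cases hv0 : d + d' = 0
  · have hnd : -d = d' := neg_eq_of_add_eq_zero_left (by rw [add_comm]; exact hv0)
    exact hLin σ hσ d hd (by rw [hnd]; exact hd')
  -- extract a nonzero lineality vector x₀
  have hex : ∃ σ₀ ∈ maxCones Δ, ∃ x₀ : Fin 2 → ℝ, x₀ ≠ 0 ∧
      x₀ ∈ extR P '' barCone Δ P σ₀ ∧ -x₀ ∈ extR P '' barCone Δ P σ₀ := by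
    by_contra hcon
    push_neg at hcon
    have hsub0 : (⋃ υ ∈ maxCones Δ,
        {x : Fin 2 → ℝ | x ∈ extR P '' barCone Δ P υ ∧ -x ∈ extR P '' barCone Δ P υ})
        ⊆ (⊥ : Submodule ℝ (Fin 2 → ℝ)) := by
      intro x hx
      obtain ⟨υ, hυ, hx1, hx2⟩ := Set.mem_iUnion₂.1 hx
      by_contra hx0
      exact (hcon υ hυ x (by simpa using hx0) hx1) hx2
    have hVbot : V ≤ ⊥ := by
      rw [hVeq]
      exact Submodule.span_le.2 hsub0
    exact hv0 (by simpa using hVbot hsum)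
  obtain ⟨σ₀, hσ₀, x₀, hx₀0, hx₀D, hnx₀D⟩ := hex
  have hx₀V : x₀ ∈ V := hLin σ₀ hσ₀ x₀ hx₀D hnx₀D
  -- d + d' is a nonzero multiple of x₀
  obtain ⟨s₀, hs₀⟩ := hVsub x₀ hx₀V
  obtain ⟨s₁, hs₁⟩ := hVsub _ hsum
  have hs₀0 : s₀ ≠ 0 := by
    intro hcon
    rw [hcon, zero_smul] at hs₀
    exact hx₀0 hs₀
  have hν : ∃ ν : ℝ, ν ≠ 0 ∧ d + d' = ν • x₀ := by
    refine ⟨s₁/s₀, ?_, ?_⟩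
    · intro hcon
      rw [div_eq_zero_iff] at hcon
      rcases hcon with h | h
      · rw [h, zero_smul] at hs₁; exact hv0 hs₁
      · exact hs₀0 h
    · rw [hs₁, hs₀, smul_smul]
      congr 1
      field_simp
  obtain ⟨ν, hν0, hνe⟩ := hν
  by_cases hdz : det2 x₀ d = 0
  · obtain ⟨t, ht⟩ := (det2_eq_zero_iff hx₀0).1 hdz
    rw [ht]
    exact Submodule.smul_mem _ _ hx₀V
  -- D₀ both-sided case : D₀ is everything
  by_cases hboth : (∃ p ∈ extR P '' barCone Δ P σ₀, det2 x₀ p < 0) ∧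
      (∃ q ∈ extR P '' barCone Δ P σ₀, 0 < det2 x₀ q)
  · obtain ⟨⟨p, hp, hpneg⟩, ⟨q, hq, hqpos⟩⟩ := hboth
    have hD₀cone : IsCone (extR P '' barCone Δ P σ₀) := isCone_image _ (barCone_isCone σ₀)
    have hline : ∀ t : ℝ, t • x₀ ∈ extR P '' barCone Δ P σ₀ := by
      intro t
      rcases le_or_gt 0 t with h | h
      · exact hD₀cone.smul_mem h hx₀D
      · have := hD₀cone.smul_mem (by linarith : (0:ℝ) ≤ -t) hnx₀D
        rwa [smul_neg, ← neg_smul, neg_neg] at this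
    have huniv : ∀ w : Fin 2 → ℝ, w ∈ extR P '' barCone Δ P σ₀ := by
      intro w
      rcases le_or_gt 0 (det2 x₀ w) with h | h
      · set a := det2 x₀ w / det2 x₀ q with ha
        have ha0 : 0 ≤ a := div_nonneg h (le_of_lt hqpos)
        have hker : det2 x₀ (w - a • q) = 0 := by
          rw [det2_sub_right, det2_smul_right, ha,
            div_mul_cancel₀ _ (ne_of_gt hqpos), sub_self]
        obtain ⟨t', ht'⟩ := (det2_eq_zero_iff hx₀0).1 hker
        have : w = a • q + t' • x₀ := by
          rw [← ht']; abel
        rw [this]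
        exact hD₀cone.add_mem (hD₀cone.smul_mem ha0 hq) (hline t')
      · set a := det2 x₀ w / det2 x₀ p with ha
        have ha0 : 0 ≤ a := by
          apply le_of_lt
          apply div_pos_of_neg_of_neg h hpneg
        have hker : det2 x₀ (w - a • p) = 0 := by
          rw [det2_sub_right, det2_smul_right, ha,
            div_mul_cancel₀ _ (ne_of_lt hpneg), sub_self]
        obtain ⟨t', ht'⟩ := (det2_eq_zero_iff hx₀0).1 hker
        have : w = a • p + t' • x₀ := by
          rw [← ht']; abel
        rw [this]
        exact hD₀cone.add_mem (hD₀cone.smul_mem ha0 hp) (hline t')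
    exact hLin σ₀ hσ₀ d (huniv d) (huniv (-d))
  · -- one-sided case
    have hside : (∀ p ∈ extR P '' barCone Δ P σ₀, 0 ≤ det2 x₀ p) ∨
        (∀ p ∈ extR P '' barCone Δ P σ₀, det2 x₀ p ≤ 0) := by
      rcases not_and_or.mp hboth with h | h
      · push_neg at h; left; exact h
      · push_neg at h; right; exact h
    obtain ⟨τp, hτp, hsimτp, sp, hsp, hspx⟩ :=
      ray_point_of_oneSided hΔcone hσ₀ hx₀0 hx₀D hside
    have hsideneg : (∀ p ∈ extR P '' barCone Δ P σ₀, 0 ≤ det2 (-x₀) p) ∨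
        (∀ p ∈ extR P '' barCone Δ P σ₀, det2 (-x₀) p ≤ 0) := by
      rcases hside with h | h
      · right; intro p hp; rw [det2_neg_left]; linarith [h p hp]
      · left; intro p hp; rw [det2_neg_left]; linarith [h p hp]
    obtain ⟨τm, hτm, hsimτm, sm', hsm', hsmx'⟩ :=
      ray_point_of_oneSided hΔcone hσ₀ (by simpa using neg_ne_zero.2 hx₀0) hnx₀D hsideneg
    have hsmx : (-sm') • x₀ ∈ extR P '' τm := by
      rwa [neg_smul, ← smul_neg]
    -- the merging core
    have key : ∀ x₁ : Fin 2 → ℝ, x₁ ≠ 0 → x₁ ∈ V →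
        x₁ ∈ extR P '' barCone Δ P σ₀ → -x₁ ∈ extR P '' barCone Δ P σ₀ →
        (∀ s : ℝ, s ≠ 0 → ∃ τ ∈ maxCones Δ, simRel Δ P σ₀ τ ∧
          ∃ s' : ℝ, 0 < s * s' ∧ s' • x₁ ∈ extR P '' τ) →
        det2 x₁ d < 0 → (∃ ν' : ℝ, ν' ≠ 0 ∧ d + d' = ν' • x₁) →
        d ∈ (V : Set (Fin 2 → ℝ)) := by
      intro x₁ hx₁0 hx₁V hx₁D hnx₁D hrays hdneg hν'
      obtain ⟨ν', hν'0, hν'e⟩ := hν'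
      have hd'pos : 0 < det2 x₁ d' := by
        have h0 : det2 x₁ (d + d') = 0 := by
          rw [hν'e, det2_smul_right, det2_self, mul_zero]
        rw [det2_add_right] at h0
        linarith
      -- members of both signs
      obtain ⟨ld, hld, hldc⟩ := D_rep hd
      have hlneg : det2 x₁ (lcomb ld) < 0 := by rw [← hldc]; exact hdneg
      obtain ⟨pp, hppl, hppneg⟩ := lcomb_sign (fun r hr => (hld r hr).1) hlneg
      obtain ⟨τa, hτa, hsima, huτa⟩ := (hld pp hppl).2
      obtain ⟨ld', hld', hldc'⟩ := D_rep hd'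
      have hlpos : det2 (-x₁) (lcomb ld') < 0 := by
        rw [det2_neg_left, ← hldc']; linarith
      obtain ⟨qq, hqql, hqqneg⟩ := lcomb_sign (fun r hr => (hld' r hr).1) hlpos
      obtain ⟨τb, hτb, hsimb, huτb⟩ := (hld' qq hqql).2
      obtain ⟨α, hα, hαneg⟩ := shadow_to_piece_sign (hΔcone τa hτa.1) huτa hppneg
      obtain ⟨β, hβ, hβneg⟩ := shadow_to_piece_sign (hΔcone τb hτb.1) huτb hqqneg
      have hβpos : 0 ≤ det2 x₁ β := by
        rw [det2_neg_left] at hβneg; linarith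
      have hchain : simRel Δ P τa τb := (simRel_symm hsima).trans hsimb
      obtain ⟨c, hc, hsimc, u, v, hu, hv, hun, hvp⟩ :=
        walk_extract x₁ hchain hτa.1 hα hαneg β hβ hβpos
      have hsimσc : simRel Δ P σ c := hsima.trans hsimc
      obtain ⟨m, hm, hmz⟩ := crossing_point (piece_convex (hΔcone c hc)) hu hv hun hvp
      obtain ⟨t, htz⟩ := (det2_eq_zero_iff hx₁0).1 hmz
      by_cases ht0 : t = 0
      · exfalso
        have hm0 : (0 : Fin 2 → ℝ) ∈ piece P c := by
          rw [ht0, zero_smul] at htz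
          rwa [htz] at hm
        have huV : u ∈ (V : Set (Fin 2 → ℝ)) :=
          noline_of_hLin hΔfin hΔcone (VS := (V : Set (Fin 2 → ℝ)))
            (fun υ' hυ' x hx hnx => hLin υ' hυ' x hx hnx) hc hu
            (piece_zero_symm (hΔcone c hc) hm0 hu)
        obtain ⟨r, hr⟩ := hVsub u huV
        obtain ⟨r', hr'⟩ := hVsub x₁ hx₁V
        have hr'0 : r' ≠ 0 := by
          intro hcon; rw [hcon, zero_smul] at hr'; exact hx₁0 hr'
        have hcol : u = (r/r') • x₁ := by
          rw [hr, hr', smul_smul]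
          congr 1
          field_simp
        rw [hcol, det2_smul_right, det2_self, mul_zero] at hun
        exact lt_irrefl 0 hun
      · -- merge with the ray class
        obtain ⟨τs, hτs, hsimτs, s', hss', hs'x⟩ := hrays t ht0
        have hs'0 : s' ≠ 0 := by
          intro hcon; rw [hcon, mul_zero] at hss'; exact lt_irrefl 0 hss'
        have hdet : det2 m u ≠ 0 := by
          rw [htz, det2_smul_left]
          exact mul_ne_zero ht0 (ne_of_lt hun)
        have hspanc : Submodule.span ℝ (extR P '' c) = ⊤ :=
          span_top_of_det2 (piece_subset_shadow hm) (piece_subset_shadow hu) hdet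
        obtain ⟨r₀, hr₀⟩ := piece_nonempty (P := P) (hΔcone τs hτs.1)
        obtain ⟨ε, hε, hdir⟩ := piece_dir (hΔcone c hc) hspanc hm r₀
        set t₂ := ε/2 with ht₂
        have ht₂0 : 0 < t₂ := by positivity
        have hxstar_c : m + t₂ • r₀ ∈ piece P c := by
          apply hdir
          rw [abs_of_pos ht₂0, ht₂]
          linarith
        have hxstar_τs : m + t₂ • r₀ ∈ piece P τs := by
          have hcoef : 0 < t / s' := by
            rcases lt_or_gt_of_ne ht0 with h | h
            · have : s' < 0 := by nlinarith
              exact div_pos_of_neg_of_neg h this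
            · have : 0 < s' := by nlinarith
              exact div_pos h this
          have hshad : (t/s'/t₂) • (s' • x₁) ∈ extR P '' τs := by
            apply (isCone_image (extR P) (hΔcone τs hτs.1)).smul_mem _ hs'x
            positivity
          have heq : m + t₂ • r₀ = t₂ • (r₀ + (t/s'/t₂) • (s' • x₁)) := by
            rw [smul_add, smul_smul, smul_smul]
            rw [show t₂ * (t/s'/t₂) * s' = t from by field_simp]
            rw [htz]
            abel
          rw [heq]
          exact piece_smul (hΔcone τs hτs.1) ht₂0
            (piece_add_shadow (hΔcone τs hτs.1) hr₀ hshad)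
        have hmerge : simRel Δ P σ σ₀ := by
          apply simRel_merge hsimσc (hsimτs) hc hτs.1
          exact ⟨m + t₂ • r₀, hxstar_c, hxstar_τs⟩
        -- conclude with the lineality face trick
        have hDeq : extR P '' barCone Δ P σ = extR P '' barCone Δ P σ₀ := by
          rw [barCone_eq_of_simRel hmerge]
        have hDcone : IsCone (extR P '' barCone Δ P σ) := isCone_image _ (barCone_isCone σ)
        have hx₁σ : x₁ ∈ extR P '' barCone Δ P σ := by rw [hDeq]; exact hx₁D
        have hnx₁σ : -x₁ ∈ extR P '' barCone Δ P σ := by rw [hDeq]; exact hnx₁D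
        have hsumLin : d + d' ∈ {x | x ∈ extR P '' barCone Δ P σ ∧
            -x ∈ extR P '' barCone Δ P σ} := by
          constructor
          · rw [hν'e]
            rcases le_or_gt 0 ν' with h | h
            · exact hDcone.smul_mem h hx₁σ
            · have := hDcone.smul_mem (by linarith : (0:ℝ) ≤ -ν') hnx₁σ
              rwa [smul_neg, neg_smul, neg_neg] at this
          · rw [hν'e]
            rcases le_or_gt 0 ν' with h | h
            · have := hDcone.smul_mem h hnx₁σ
              rwa [smul_neg] at this
            · have := hDcone.smul_mem (by linarith : (0:ℝ) ≤ -ν') hx₁σ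
              rwa [neg_smul] at this
        have hface := (lineality_isFaceOf hDcone).2.2 d hd d' hd' hsumLin
        exact hLin σ hσ d hface.1.1 hface.1.2
    -- apply the core with x₀ or -x₀ according to the sign
    rcases lt_or_gt_of_ne hdz with hneg | hpos
    · apply key x₀ hx₀0 hx₀V hx₀D hnx₀D ?_ hneg ⟨ν, hν0, hνe⟩
      intro s hs
      rcases lt_or_gt_of_ne hs with h | h
      · exact ⟨τm, hτm, hsimτm, -sm', by nlinarith, hsmx⟩
      · exact ⟨τp, hτp, hsimτp, sp, by nlinarith, hspx⟩
    · apply key (-x₀) (neg_ne_zero.2 hx₀0) (Submodule.neg_mem _ hx₀V) hnx₀D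
        (by simpa using hx₀D) ?_ (by rw [det2_neg_left]; linarith) ?_
      · intro s hs
        rcases lt_or_gt_of_ne hs with h | h
        · refine ⟨τp, hτp, hsimτp, -sp, by nlinarith, ?_⟩
          rw [neg_smul, smul_neg, neg_neg]
          exact hspx
        · refine ⟨τm, hτm, hsimτm, sm', by nlinarith, ?_⟩
          rwa [smul_neg, ← neg_smul]
      · refine ⟨-ν, neg_ne_zero.2 hν0, ?_⟩
        rw [hνe, neg_smul, smul_neg, neg_neg]

end MonsterTwo

/-! ### the universal property machinery -/

section Kappa

lemma fan_cone_isCone {k : ℕ} {Δ' : Set (Set (Fin k → ℝ))} (hfan : IsFan Δ')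
    {τ : Set (Fin k → ℝ)} (hτ : τ ∈ Δ') : IsCone τ := by
  obtain ⟨s, hs⟩ := hfan.1.1.2 τ hτ
  rw [hs]
  exact isCone_coneHull _

lemma min_cone_exists {k : ℕ} {Δ' : Set (Set (Fin k → ℝ))} (hfan : IsFan Δ')
    {z : Fin k → ℝ} {κ₀ : Set (Fin k → ℝ)} (hκ₀ : κ₀ ∈ Δ') (hz : z ∈ κ₀) :
    ∃ κ ∈ Δ', z ∈ κ ∧ ∀ κ' ∈ Δ', z ∈ κ' → κ ⊆ κ' := by
  obtain ⟨κ, hκ, hmin⟩ := Set.Finite.exists_minimalFor id {κ ∈ Δ' | z ∈ κ}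
    (hfan.1.1.1.subset (fun x hx => hx.1)) ⟨κ₀, hκ₀, hz⟩
  refine ⟨κ, hκ.1, hκ.2, ?_⟩
  intro κ' hκ' hzκ'
  have hface : IsFaceOf (κ ∩ κ') κ := hfan.1.2.2 κ hκ.1 κ' hκ'
  have hmem : κ ∩ κ' ∈ Δ' := hfan.1.2.1 κ hκ.1 _ hface
  have := le_antisymm (hmin ⟨hmem, hκ.2, hzκ'⟩ inter_subset_left) inter_subset_left
  intro x hx
  have hxi : x ∈ κ ∩ κ' := by
    have heq : κ = κ ∩ κ' := this
    rw [← heq]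
    exact hx
  exact hxi.2

lemma claimA {n k : ℕ} {Δ' : Set (Set (Fin k → ℝ))} (hfan : IsFan Δ')
    {F : (Fin n → ℤ) →ₗ[ℤ] (Fin k → ℤ)}
    {a : Set (Fin n → ℝ)} (hacone : IsCone a) {τa : Set (Fin k → ℝ)} (hτa : τa ∈ Δ')
    (hFa : extR F '' a ⊆ τa) {p : Fin n → ℝ} (hp : p ∈ intrinsicInterior ℝ a)
    {κ' : Set (Fin k → ℝ)} (hκ' : κ' ∈ Δ') (hpκ : extR F p ∈ κ') :
    extR F '' a ⊆ κ' := by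
  have hface : IsFaceOf (τa ∩ κ') τa := hfan.1.2.2 τa hτa κ' hκ'
  rintro _ ⟨x, hx, rfl⟩
  obtain ⟨ε, hε, hsub⟩ := relint_sub hacone hp hx
  have h1 : extR F (p - ε • x) ∈ τa := hFa ⟨_, hsub, rfl⟩
  have h2 : (ε : ℝ) • extR F x ∈ τa := by
    rw [← map_smul]
    exact hFa ⟨_, hacone.smul_mem hε.le hx, rfl⟩
  have hsum : extR F (p - ε • x) + ε • extR F x = extR F p := by
    rw [← map_smul, ← map_add]
    congr 1
    abel
  have hmem : extR F (p - ε • x) + ε • extR F x ∈ τa ∩ κ' := by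
    rw [hsum]
    exact ⟨hFa ⟨p, relint_subset' hp, rfl⟩, hpκ⟩
  have habs := hface.2.2 _ h1 _ h2 hmem
  have hsc := (hface.1.2.2) ε⁻¹ (le_of_lt (inv_pos.2 hε)) _ habs.2
  rw [inv_smul_smul₀ (ne_of_gt hε)] at hsc
  exact hsc.2

lemma kappa_main {n : ℕ} {Δ : Set (Set (Fin n → ℝ))}
    {P : (Fin n → ℤ) →ₗ[ℤ] (Fin 2 → ℤ)} (hΔcone : ∀ c ∈ Δ, IsCone c)
    {k : ℕ} {Δ' : Set (Set (Fin k → ℝ))} (hfan : IsFan Δ')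
    {F : (Fin n → ℤ) →ₗ[ℤ] (Fin k → ℤ)} {G : (Fin 2 → ℤ) →ₗ[ℤ] (Fin k → ℤ)}
    (hFG : extR F = (extR G).comp (extR P))
    (hmap : ∀ c ∈ Δ, ∃ τ ∈ Δ', extR F '' c ⊆ τ)
    {σ : Set (Fin n → ℝ)} (hσ : σ ∈ Δ) :
    ∃ κ ∈ Δ', extR F '' barCone Δ P σ ⊆ κ := by
  obtain ⟨pσ, hpσ⟩ := relint_nonempty (hΔcone σ hσ)
  obtain ⟨τσ, hτσ, hFτσ⟩ := hmap σ hσ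
  obtain ⟨κ, hκ, hzκ, hκmin⟩ := min_cone_exists hfan hτσ (hFτσ ⟨pσ, relint_subset' hpσ, rfl⟩)
  refine ⟨κ, hκ, ?_⟩
  have hinv : ∀ c, simRel Δ P σ c →
      (extR F '' c ⊆ κ ∧ ∃ p, p ∈ intrinsicInterior ℝ c ∧
        ∀ κ' ∈ Δ', extR F p ∈ κ' → κ ⊆ κ') := by
    intro c hsim
    rw [simRel_eq] at hsim
    induction hsim with
    | refl =>
      constructor
      · exact claimA hfan (hΔcone σ hσ) hτσ hFτσ hpσ hκ hzκ
      · exact ⟨pσ, hpσ, fun κ' hκ' hz => hκmin κ' hκ' hz⟩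
    | @tail b' b hab hstep ih =>
      obtain ⟨hIH1, p, hpmem, hpmin⟩ := ih
      obtain ⟨hb'Δ, hbΔ, γ, ⟨pc, hpc, hγ1⟩, ⟨pb, hpb, hγ2⟩⟩ := hstep
      have heqF : extR F pc = extR F pb := by
        rw [hFG]
        show extR G (extR P pc) = extR G (extR P pb)
        rw [hγ1, hγ2]
      obtain ⟨τb', hτb', hFτb'⟩ := hmap b' hb'Δ
      obtain ⟨τb, hτb, hFτb⟩ := hmap b hbΔ
      -- (*) : every fan cone containing F pc contains κ
      have hstar : ∀ κ' ∈ Δ', extR F pc ∈ κ' → κ ⊆ κ' := by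
        intro κ' hκ' hzc
        have hsub : extR F '' b' ⊆ κ' := claimA hfan (hΔcone b' hb'Δ) hτb' hFτb' hpc hκ' hzc
        exact hpmin κ' hκ' (hsub ⟨p, relint_subset' hpmem, rfl⟩)
      have hFpcκ : extR F pc ∈ κ := by
        have hsub : extR F '' b' ⊆ κ :=
          claimA hfan (hΔcone b' hb'Δ) hτb' hFτb' hpmem hκ
            (hIH1 ⟨p, relint_subset' hpmem, rfl⟩)
        exact hsub ⟨pc, relint_subset' hpc, rfl⟩
      constructor
      · apply claimA hfan (hΔcone b hbΔ) hτb hFτb hpb hκ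
        rw [← heqF]
        exact hFpcκ
      · refine ⟨pb, hpb, ?_⟩
        intro κ' hκ' hz
        apply hstar κ' hκ'
        rw [heqF]
        exact hz
  apply le_trans (le_of_eq (image_coneHull (extR F) _))
  apply coneHull_min (fan_cone_isCone hfan hκ)
  rintro _ ⟨y, hy, rfl⟩
  obtain ⟨τ, ⟨hτmax, hτsim⟩, hyτ⟩ := hy
  exact (hinv τ hτsim).1 ⟨y, hyτ, rfl⟩

end Kappa

/-! ### dimension counting and rationality -/

section Counting

lemma surj_count {n k : ℕ} {f : (Fin n → ℝ) →ₗ[ℝ] (Fin k → ℝ)}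
    (hf : Function.Surjective f) :
    k + Module.finrank ℝ (LinearMap.ker f) = n := by
  have h := LinearMap.finrank_range_add_finrank_ker f
  rw [LinearMap.range_eq_top.2 hf, finrank_top] at h
  simpa using h

lemma finrank_comap_surj {n : ℕ} {f : (Fin n → ℝ) →ₗ[ℝ] (Fin 2 → ℝ)}
    (hf : Function.Surjective f) (V : Submodule ℝ (Fin 2 → ℝ)) :
    Module.finrank ℝ (Submodule.comap f V) =
      Module.finrank ℝ V + Module.finrank ℝ (LinearMap.ker f) := by
  set W := Submodule.comap f V with hW
  have h1 := LinearMap.finrank_range_add_finrank_ker (f.domRestrict W)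
  have hrange : LinearMap.range (f.domRestrict W) = V := by
    rw [LinearMap.range_domRestrict]
    exact Submodule.map_comap_eq_of_surjective hf V
  have hkerW : LinearMap.ker f ≤ W := by
    intro x hx
    have : f x = 0 := LinearMap.mem_ker.mp hx
    show f x ∈ V
    rw [this]
    exact V.zero_mem
  have hker : Module.finrank ℝ (LinearMap.ker (f.domRestrict W)) =
      Module.finrank ℝ (LinearMap.ker f) := by
    rw [LinearMap.ker_domRestrict]
    rw [← Submodule.finrank_map_subtype_eq W (Submodule.comap W.subtype (LinearMap.ker f))]
    have hq : Submodule.map W.subtype (Submodule.comap W.subtype (LinearMap.ker f)) =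
        LinearMap.ker f := by
      rw [Submodule.map_comap_subtype]
      exact inf_eq_right.2 hkerW
    rw [hq]
  rw [hrange, hker] at h1
  exact h1.symm

end Counting

section Rationality

variable {E : Type*} [NormedAddCommGroup E] [NormedSpace ℝ E]

lemma coneHull_sUnion_hulls {S : Set (Set E)} {G : Set E → Set E}
    (hG : ∀ X ∈ S, X = coneHull (G X)) :
    coneHull (⋃₀ S) = coneHull (⋃ X ∈ S, G X) := by
  apply le_antisymm
  · apply coneHull_min (isCone_coneHull _)
    rintro x ⟨X, hX, hx⟩
    rw [hG X hX] at hx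
    have : coneHull (G X) ⊆ coneHull (⋃ X ∈ S, G X) :=
      coneHull_mono (fun y hy => Set.mem_iUnion₂.2 ⟨X, hX, hy⟩)
    exact this hx
  · apply coneHull_mono
    intro y hy
    obtain ⟨X, hX, hyX⟩ := Set.mem_iUnion₂.1 hy
    refine ⟨X, hX, ?_⟩
    rw [hG X hX]
    exact subset_coneHull _ hyX

/-- the lineality part of a rational cone is spanned by its rational lineality vectors -/
lemma lineality_rational_span {m : ℕ} {s : Set (Fin m → ℝ)}
    (hrat : ∀ g ∈ s, ∃ u : Fin m → ℤ, g = toR u) :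
    {x | x ∈ coneHull s ∧ -x ∈ coneHull s} ⊆
      (Submodule.span ℝ {y : Fin m → ℝ | (∃ u : Fin m → ℤ, y = toR u) ∧
        y ∈ coneHull s ∧ -y ∈ coneHull s} : Set (Fin m → ℝ)) := by
  have key : ∀ l : List (ℝ × (Fin m → ℝ)), (∀ p ∈ l, 0 ≤ p.1 ∧ p.2 ∈ s) →
      -(lcomb l) ∈ coneHull s →
      lcomb l ∈ Submodule.span ℝ {y : Fin m → ℝ | (∃ u : Fin m → ℤ, y = toR u) ∧
        y ∈ coneHull s ∧ -y ∈ coneHull s} := by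
    intro l
    induction l with
    | nil =>
      intro _ _
      rw [lcomb_nil]
      exact Submodule.zero_mem _
    | cons p l ih =>
      intro hl hneg
      rw [lcomb_cons] at hneg ⊢
      have hcone := isCone_coneHull s
      have hpc : p.1 • p.2 ∈ coneHull s :=
        hcone.smul_mem (hl p (by simp)).1 (subset_coneHull _ (hl p (by simp)).2)
      have hlc : lcomb l ∈ coneHull s :=
        lcomb_mem hcone (fun q hq => ⟨(hl q (by simp [hq])).1,
          subset_coneHull _ (hl q (by simp [hq])).2⟩)
      have hnl : -(lcomb l) ∈ coneHull s := by
        have : -(lcomb l) = p.1 • p.2 + -(p.1 • p.2 + lcomb l) := by abel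
        rw [this]
        exact hcone.add_mem hpc hneg
      have hterm : p.1 • p.2 ∈ Submodule.span ℝ {y : Fin m → ℝ |
          (∃ u : Fin m → ℤ, y = toR u) ∧ y ∈ coneHull s ∧ -y ∈ coneHull s} := by
        rcases eq_or_lt_of_le (hl p (by simp)).1 with hz | hpos
        · rw [← hz, zero_smul]
          exact Submodule.zero_mem _
        · have hng : -(p.1 • p.2) ∈ coneHull s := by
            have : -(p.1 • p.2) = lcomb l + -(p.1 • p.2 + lcomb l) := by abel
            rw [this]
            exact hcone.add_mem hlc hneg
          have hnp2 : -p.2 ∈ coneHull s := by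
            have := hcone.smul_mem (le_of_lt (inv_pos.2 hpos)) hng
            rwa [smul_neg, inv_smul_smul₀ (ne_of_gt hpos)] at this
          apply Submodule.smul_mem
          apply Submodule.subset_span
          exact ⟨hrat p.2 (hl p (by simp)).2, subset_coneHull _ (hl p (by simp)).2, hnp2⟩
      exact Submodule.add_mem _ hterm (ih (fun q hq => hl q (by simp [hq])) hnl)
  rintro x ⟨hx, hnx⟩
  rw [coneHull_eq_lcomb] at hx
  obtain ⟨l, hl, rfl⟩ := hx
  exact key l hl hnx

end Rationality

section FaceHelpers

variable {E : Type*} [NormedAddCommGroup E] [NormedSpace ℝ E]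

lemma face_inter_faces {C₁ C₂ ρ₁ ρ₂ : Set E} (h₁ : IsFaceOf ρ₁ C₁) (h₂ : IsFaceOf ρ₂ C₂)
    (h12 : IsFaceOf (C₁ ∩ C₂) C₁) : IsFaceOf (ρ₁ ∩ ρ₂) ρ₁ := by
  refine ⟨isCone_inter h₁.1 h₂.1, inter_subset_left, ?_⟩
  intro x hx y hy hxy
  have hxC : x ∈ C₁ := h₁.2.1 hx
  have hyC : y ∈ C₁ := h₁.2.1 hy
  have hφ : x + y ∈ C₁ ∩ C₂ := ⟨h₁.2.1 hxy.1, h₂.2.1 hxy.2⟩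
  have h12' := h12.2.2 x hxC y hyC hφ
  have h2' := h₂.2.2 x h12'.1.2 y h12'.2.2 hxy.2
  exact ⟨⟨hx, h2'.1⟩, hy, h2'.2⟩

lemma fin1_eq_smul {x y : Fin 1 → ℝ} (hx : x 0 ≠ 0) : y = (y 0 / x 0) • x := by
  funext i
  have hi : i = 0 := Subsingleton.elim i 0
  subst hi
  show y 0 = (y 0 / x 0) * x 0
  field_simp

lemma face_inter_1d {C₁ C₂ : Set (Fin 1 → ℝ)} (h₁ : IsCone C₁) (h₂ : IsCone C₂)
    (hs₁ : IsStrictlyConvexCone C₁) :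
    IsFaceOf (C₁ ∩ C₂) C₁ := by
  refine ⟨isCone_inter h₁ h₂, inter_subset_left, ?_⟩
  have key : ∀ x ∈ C₁, ∀ y ∈ C₁, x + y ∈ C₂ → x ∈ C₂ := by
    intro x hx y hy hxy
    by_cases hx0 : x 0 = 0
    · have : x = 0 := by
        funext i
        have : i = 0 := Subsingleton.elim i 0
        rw [this, hx0]; rfl
      rw [this]
      exact h₂.zero_mem
    by_cases hy0 : y 0 = 0
    · have hyz : y = 0 := by
        funext i
        have : i = 0 := Subsingleton.elim i 0
        rw [this, hy0]; rfl
      rw [hyz, add_zero] at hxy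
      exact hxy
    · -- same sign
      have hyx : y = (y 0 / x 0) • x := fin1_eq_smul hx0
      have hq0 : y 0 / x 0 ≠ 0 := div_ne_zero hy0 hx0
      have hsame : 0 < y 0 / x 0 := by
        rcases lt_or_gt_of_ne hq0 with h | h
        · exfalso
          have hny : -y ∈ C₁ := by
            rw [hyx, ← neg_smul]
            exact h₁.smul_mem (by linarith) hx
          exact hy0 (by rw [hs₁ y hy hny]; rfl)
        · exact h
      set q := y 0 / x 0 with hqdef
      have h1s : (0:ℝ) < 1 + q := by linarith
      have hxe : x = (1/(1+q)) • (x + y) := by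
        rw [hyx]
        funext i
        have hi : i = 0 := Subsingleton.elim i 0
        subst hi
        show x 0 = (1/(1+q)) * (x 0 + q * x 0)
        field_simp
      rw [hxe]
      exact h₂.smul_mem (by positivity) hxy
  intro x hx y hy hxy
  refine ⟨⟨hx, key x hx y hy hxy.2⟩, hy, key y hy x hx ?_⟩
  rw [add_comm]
  exact hxy.2

end FaceHelpers

/-! ### last helpers -/

section LastHelpers

lemma toR_inj {n : ℕ} : Function.Injective (toR (n := n)) := by
  intro u v h
  funext i
  have h' : (u i : ℝ) = (v i : ℝ) := congrFun h i
  exact_mod_cast h'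

lemma extR_apply {n m : ℕ} (F : (Fin n → ℤ) →ₗ[ℤ] (Fin m → ℤ)) (x : Fin n → ℝ) (i : Fin m) :
    extR F x i = ∑ j, ((F (Pi.single j 1)) i : ℝ) * x j := by
  simp [extR, Matrix.mulVecLin_apply, Matrix.mulVec, dotProduct]

def rmap (u₀ : Fin 2 → ℤ) : (Fin 2 → ℤ) →ₗ[ℤ] (Fin 1 → ℤ) where
  toFun v := fun _ => u₀ 0 * v 1 - u₀ 1 * v 0
  map_add' a b := by funext i; simp; ring
  map_smul' c a := by funext i; simp; ring

lemma extR_rmap (u₀ : Fin 2 → ℤ) (w : Fin 2 → ℝ) (i : Fin 1) :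
    extR (rmap u₀) w i = det2 (toR u₀) w := by
  rw [extR_apply, Fin.sum_univ_two]
  have h0 : rmap u₀ (Pi.single 0 1) i = - u₀ 1 := by
    simp [rmap, Pi.single_apply]
  have h1 : rmap u₀ (Pi.single 1 1) i = u₀ 0 := by
    simp [rmap, Pi.single_apply]
  rw [h0, h1]
  simp [det2, toR]
  ring

lemma IsFaceOf.image {E F : Type*} [NormedAddCommGroup E] [NormedSpace ℝ E]
    [NormedAddCommGroup F] [NormedSpace ℝ F] {f : E →ₗ[ℝ] F}
    (hinj : Function.Injective f) {τ σ : Set E} (h : IsFaceOf τ σ) :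
    IsFaceOf (f '' τ) (f '' σ) := by
  refine ⟨isCone_image f h.1, image_mono (f := f) h.2.1, ?_⟩
  rintro _ ⟨a, ha, rfl⟩ _ ⟨b, hb, rfl⟩ hab
  obtain ⟨c, hc, hce⟩ := hab
  have hab' : a + b ∈ τ := by
    have : f (a + b) = f c := by rw [map_add, hce]
    rwa [hinj this]
  have := h.2.2 a ha b hb hab'
  exact ⟨⟨a, this.1, rfl⟩, ⟨b, this.2, rfl⟩⟩

lemma fin0_eq_zero (x : Fin 0 → ℝ) : x = 0 := by
  funext i
  exact i.elim0

end LastHelpers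

/-- Let `Δ` be a fan in a lattice `N` and `L ⊆ N` a primitive
sublattice of codimension `2`, and let `P : N → N/L` be the projection. Let
`V` be the sum of the maximal linear subspaces contained in the cones
`P^ℝ(σ̄)`, `σ ∈ Δ` maximal, set `L̂ := N ∩ P⁻¹(V)` and let `Q : N → N/L̂` be
the projection. Then the faces of the cones `Q^ℝ(σ̄)`, where `σ` ranges over
the maximal cones of `Δ`, form the quotient fan of `Δ` by `L`. -/
theorem codim_two_quotient_fan {n : ℕ} (Δ : Set (Set (Fin n → ℝ))) (hΔ : IsFan Δ)
    (L : Submodule ℤ (Fin n → ℤ)) (hL : IsPrimitive L)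
    (hcodim : Module.finrank ℤ L + 2 = n)
    (P : (Fin n → ℤ) →ₗ[ℤ] (Fin 2 → ℤ)) (hPsurj : Function.Surjective P)
    (hPker : LinearMap.ker P = L)
    (V : Submodule ℝ (Fin 2 → ℝ))
    (hV : V = Submodule.span ℝ (⋃ σ ∈ maxCones Δ,
      {x | x ∈ extR P '' barCone Δ P σ ∧ -x ∈ extR P '' barCone Δ P σ}))
    {k : ℕ} (Q : (Fin n → ℤ) →ₗ[ℤ] (Fin k → ℤ)) (hQsurj : Function.Surjective Q)
    (hQker : ∀ v : Fin n → ℤ, Q v = 0 ↔ extR P (toR v) ∈ V) :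
    IsQuotientFan Δ L Q
      {ρ | ∃ σ ∈ maxCones Δ, IsFaceOf ρ (extR Q '' barCone Δ P σ)} := by
  classical
  have hΔfin : Δ.Finite := hΔ.1.1.1
  have hΔrat : ∀ c ∈ Δ, IsRatCone c := hΔ.1.1.2
  have hΔcone : ∀ c ∈ Δ, IsCone c := by
    intro c hc
    obtain ⟨s, hs⟩ := hΔrat c hc
    rw [hs]; exact isCone_coneHull _
  -- rational generators of the barCones and their shadows
  have hbarRat : ∀ σ : Set (Fin n → ℝ), ∃ sg : Set (Fin n → ℝ),
      (∀ g ∈ sg, ∃ u : Fin n → ℤ, g = toR u) ∧ sg.Finite ∧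
      barCone Δ P σ = coneHull sg := by
    intro σ
    set T := {τ | τ ∈ maxCones Δ ∧ simRel Δ P σ τ} with hT
    have hTfin : T.Finite := hΔfin.subset (fun τ hτ => hτ.1.1)
    have hch : ∀ τ ∈ T, ∃ s : Finset (Fin n → ℤ), τ = coneHull (toR '' ↑s) :=
      fun τ hτ => hΔrat τ hτ.1.1
    set G : Set (Fin n → ℝ) → Set (Fin n → ℝ) := fun X =>
      if h : X ∈ T then toR '' ↑(Classical.choose (hch X h)) else ∅ with hGdef
    have hG : ∀ X ∈ T, X = coneHull (G X) := by
      intro X hX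
      rw [hGdef]
      simp only [dif_pos hX]
      exact Classical.choose_spec (hch X hX)
    refine ⟨⋃ X ∈ T, G X, ?_, ?_, ?_⟩
    · intro g hg
      obtain ⟨X, hX, hgX⟩ := Set.mem_iUnion₂.1 hg
      rw [hGdef] at hgX
      simp only [dif_pos hX] at hgX
      obtain ⟨u, _, rfl⟩ := hgX
      exact ⟨u, rfl⟩
    · apply Set.Finite.biUnion hTfin
      intro X hX
      rw [hGdef]
      simp only [dif_pos hX]
      exact ((Classical.choose (hch X hX)).finite_toSet).image _
    · show coneHull (⋃₀ {τ | τ ∈ maxCones Δ ∧ simRel Δ P σ τ}) = _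
      rw [← hT]
      exact coneHull_sUnion_hulls hG
  have hshadowRat : ∀ (σ : Set (Fin n → ℝ)) {m : ℕ} (F : (Fin n → ℤ) →ₗ[ℤ] (Fin m → ℤ)),
      ∃ sg : Set (Fin m → ℝ), (∀ g ∈ sg, ∃ u : Fin m → ℤ, g = toR u) ∧ sg.Finite ∧
        extR F '' barCone Δ P σ = coneHull sg := by
    intro σ m F
    obtain ⟨sg, hrat, hfin, heq⟩ := hbarRat σ
    refine ⟨extR F '' sg, ?_, hfin.image _, ?_⟩
    · rintro _ ⟨g, hg, rfl⟩
      obtain ⟨u, rfl⟩ := hrat g hg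
      exact ⟨F u, extR_toR F u⟩
    · rw [heq, image_coneHull]
  have hLin : ∀ υ ∈ maxCones Δ, ∀ x : Fin 2 → ℝ, x ∈ extR P '' barCone Δ P υ →
      -x ∈ extR P '' barCone Δ P υ → x ∈ V := by
    intro υ hυ x hx hnx
    rw [hV]
    exact Submodule.subset_span (Set.mem_iUnion₂.2 ⟨υ, hυ, hx, hnx⟩)
  have htoR0 : toR (0 : Fin 2 → ℤ) = 0 := by funext i; simp [toR]
  have hkerPQint : LinearMap.ker P ≤ LinearMap.ker Q := by
    intro v hv
    rw [LinearMap.mem_ker] at hv ⊢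
    rw [hQker, extR_toR, hv, htoR0]
    exact V.zero_mem
  obtain ⟨H, hH⟩ := factor_through hPsurj hkerPQint
  have hQPreal : extR Q = (extR H).comp (extR P) := by rw [hH, extR_comp]
  have hVrat : (V : Set (Fin 2 → ℝ)) ⊆
      (Submodule.span ℝ {y : Fin 2 → ℝ | (∃ u : Fin 2 → ℤ, y = toR u) ∧ y ∈ V} :
        Set (Fin 2 → ℝ)) := by
    intro v hv
    have hv' : v ∈ Submodule.span ℝ (⋃ σ ∈ maxCones Δ,
        {x : Fin 2 → ℝ | x ∈ extR P '' barCone Δ P σ ∧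
          -x ∈ extR P '' barCone Δ P σ}) := by
      rw [← hV]; exact hv
    refine Submodule.span_le.2 ?_ hv'
    intro x hx
    obtain ⟨σ, hσ, hx1, hx2⟩ := Set.mem_iUnion₂.1 hx
    obtain ⟨sg, hrat, hfin, heq⟩ := hshadowRat σ P
    rw [heq] at hx1 hx2
    have hxs := lineality_rational_span hrat ⟨hx1, hx2⟩
    refine Submodule.span_le.2 ?_ hxs
    rintro y ⟨hyrat, hy1, hy2⟩
    apply Submodule.subset_span
    refine ⟨hyrat, ?_⟩
    apply hLin σ hσ y
    · rw [heq]; exact hy1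
    · rw [heq]; exact hy2
  have htoRk0 : toR (0 : Fin k → ℤ) = 0 := by funext i; simp [toR]
  have hWker : ∀ x : Fin n → ℝ, extR P x ∈ V → extR Q x = 0 := by
    intro x hx
    have h1 := hVrat hx
    have h2 : Submodule.span ℝ {y : Fin 2 → ℝ | (∃ u : Fin 2 → ℤ, y = toR u) ∧ y ∈ V} ≤
        LinearMap.ker (extR H) := by
      apply Submodule.span_le.2
      rintro y ⟨⟨u, rfl⟩, hyV⟩
      obtain ⟨v', hv'⟩ := hPsurj u
      rw [SetLike.mem_coe, LinearMap.mem_ker]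
      have hcalc : extR H (toR u) = toR (Q v') := by
        calc extR H (toR u) = extR H (extR P (toR v')) := by rw [extR_toR P, hv']
          _ = extR Q (toR v') := by rw [hQPreal]; rfl
          _ = toR (Q v') := extR_toR Q v'
      have hQv' : Q v' = 0 := by
        rw [hQker, extR_toR, hv']
        exact hyV
      rw [hcalc, hQv', htoRk0]
    have h3 : extR H (extR P x) = 0 := LinearMap.mem_ker.1 (h2 h1)
    rw [hQPreal]
    exact h3
  -- the trichotomy on the dimension of V
  have htri : (V = ⊤ ∧ k = 0) ∨
      ((∃ w₀ : Fin 2 → ℝ, w₀ ≠ 0 ∧ V = Submodule.span ℝ {w₀}) ∧ k = 1 ∧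
        (∀ x : Fin n → ℝ, extR Q x = 0 → extR P x ∈ V)) ∨
      (V = ⊥ ∧ k = 2 ∧ (∀ x : Fin n → ℝ, extR Q x = 0 → extR P x ∈ V)) := by
    have hfr2 : Module.finrank ℝ (Fin 2 → ℝ) = 2 := by simp
    have hfrn : Module.finrank ℝ (Fin n → ℝ) = n := by simp
    have hdV : Module.finrank ℝ V ≤ 2 := by
      have := Submodule.finrank_le V
      rwa [hfr2] at this
    have hcases : Module.finrank ℝ V = 0 ∨ Module.finrank ℝ V = 1 ∨
        Module.finrank ℝ V = 2 := by omega
    rcases hcases with h0 | h1 | h2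
    · -- V = ⊥, k = 2
      right; right
      have hVbot : V = ⊥ := Submodule.finrank_eq_zero.1 h0
      have hkQPint : LinearMap.ker Q ≤ LinearMap.ker P := by
        intro v hv
        rw [LinearMap.mem_ker] at hv ⊢
        have hmem := (hQker v).1 hv
        rw [hVbot] at hmem
        have h' : extR P (toR v) = 0 := by simpa using hmem
        rw [extR_toR] at h'
        exact toR_eq_zero.1 h'
      obtain ⟨H', hH'⟩ := factor_through hQsurj hkQPint
      have hPQreal : extR P = (extR H').comp (extR Q) := by rw [hH', extR_comp]
      have haQ : ∀ x : Fin n → ℝ, extR Q x = 0 → extR P x ∈ V := by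
        intro x hx
        rw [hVbot]
        have : extR P x = 0 := by
          rw [hPQreal]
          show extR H' (extR Q x) = 0
          rw [hx, map_zero]
        simp [this]
      have hkerEq : LinearMap.ker (extR Q) = LinearMap.ker (extR P) := by
        ext x
        simp only [LinearMap.mem_ker]
        constructor
        · intro h
          have := haQ x h
          rw [hVbot] at this
          simpa using this
        · intro h
          rw [hQPreal]
          show extR H (extR P x) = 0
          rw [h, map_zero]
      have hc1 := surj_count (extR_surj hQsurj)
      have hc2 := surj_count (extR_surj hPsurj)
      rw [hkerEq] at hc1
      exact ⟨hVbot, by omega, haQ⟩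
    · -- dim V = 1, k = 1
      right; left
      have hVne : V ≠ ⊥ := by
        intro hcon
        rw [hcon] at h1
        simp [finrank_bot] at h1
      have hratne : ∃ u₀ : Fin 2 → ℤ, toR u₀ ∈ V ∧ toR u₀ ≠ 0 := by
        by_contra hcon
        push_neg at hcon
        apply hVne
        rw [← le_bot_iff]
        intro v hv
        have hvs := hVrat hv
        have hsp : Submodule.span ℝ {y : Fin 2 → ℝ | (∃ u : Fin 2 → ℤ, y = toR u) ∧ y ∈ V} ≤
            (⊥ : Submodule ℝ (Fin 2 → ℝ)) := by
          apply Submodule.span_le.2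
          rintro y ⟨⟨u, rfl⟩, hyV⟩
          have := hcon u hyV
          simp [this]
        exact hsp hvs
      obtain ⟨u₀, hu₀V, hu₀0⟩ := hratne
      have hspan : V = Submodule.span ℝ {toR u₀} := by
        symm
        apply Submodule.eq_of_le_of_finrank_eq
        · rw [Submodule.span_le]
          intro y hy
          rw [Set.mem_singleton_iff] at hy
          rw [hy]
          exact hu₀V
        · rw [finrank_span_singleton hu₀0, h1]
      have hCint : LinearMap.ker Q ≤ LinearMap.ker ((rmap u₀) ∘ₗ P) := by
        intro v hv
        rw [LinearMap.mem_ker] at hv ⊢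
        have hPv := (hQker v).1 hv
        rw [hspan] at hPv
        obtain ⟨t, ht⟩ := Submodule.mem_span_singleton.1 hPv
        rw [← toR_eq_zero, ← extR_toR, extR_comp]
        show extR (rmap u₀) (extR P (toR v)) = 0
        funext i
        rw [extR_rmap, ← ht, det2_smul_right, det2_self, mul_zero]
        rfl
      obtain ⟨H'', hH''⟩ := factor_through hQsurj hCint
      have haQ : ∀ x : Fin n → ℝ, extR Q x = 0 → extR P x ∈ V := by
        intro x hx
        have hcx : extR ((rmap u₀) ∘ₗ P) x = 0 := by
          rw [hH'', extR_comp]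
          show extR H'' (extR Q x) = 0
          rw [hx, map_zero]
        rw [extR_comp] at hcx
        have hdet : det2 (toR u₀) (extR P x) = 0 := by
          have hc0 := congrFun hcx 0
          have : extR (rmap u₀) (extR P x) 0 = 0 := hc0
          rwa [extR_rmap] at this
        rw [hspan]
        obtain ⟨t, ht⟩ := (det2_eq_zero_iff hu₀0).1 hdet
        exact Submodule.mem_span_singleton.2 ⟨t, ht.symm⟩
      refine ⟨⟨toR u₀, hu₀0, hspan⟩, ?_, haQ⟩
      have hkerC : LinearMap.ker (extR Q) = Submodule.comap (extR P) V := by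
        ext x
        simp only [LinearMap.mem_ker, Submodule.mem_comap]
        exact ⟨fun h => haQ x h, fun h => hWker x h⟩
      have hc1 := surj_count (extR_surj hQsurj)
      have hc2 := surj_count (extR_surj hPsurj)
      have hcc := finrank_comap_surj (extR_surj hPsurj) V
      rw [hkerC, hcc, h1] at hc1
      omega
    · -- V = ⊤, k = 0
      left
      have hVtop : V = ⊤ := Submodule.eq_top_of_finrank_eq (by rw [h2, hfr2])
      refine ⟨hVtop, ?_⟩
      have hker : LinearMap.ker (extR Q) = ⊤ := by
        rw [eq_top_iff]
        intro x _
        rw [LinearMap.mem_ker]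
        exact hWker x (by rw [hVtop]; trivial)
      have hc1 := surj_count (extR_surj hQsurj)
      rw [hker, finrank_top, hfrn] at hc1
      omega
  -- strict convexity of the quotient cones
  have hCstrict : ∀ σ ∈ maxCones Δ, IsStrictlyConvexCone (extR Q '' barCone Δ P σ) := by
    intro σ hσ x hx hnx
    obtain ⟨y, hy, rfl⟩ := hx
    obtain ⟨y', hy', hy'e⟩ := hnx
    have h0 : extR Q (y + y') = 0 := by
      rw [map_add, hy'e]
      exact add_neg_cancel _
    suffices hPy : extR P y ∈ V by exact hWker y hPy
    rcases htri with ⟨hVtop, _⟩ | ⟨⟨w₀, hw₀0, hVsp⟩, _, haQ⟩ | ⟨hVbot, _, haQ⟩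
    · rw [hVtop]; trivial
    · have hPsum : extR P (y + y') ∈ V := haQ _ h0
      have hVsub' : ∀ v ∈ V, ∃ t : ℝ, v = t • w₀ := by
        intro v hv
        rw [hVsp] at hv
        obtain ⟨t, ht⟩ := Submodule.mem_span_singleton.1 hv
        exact ⟨t, ht.symm⟩
      exact class_no_straddle hΔcone hΔfin hV hVsub' hσ ⟨y, hy, rfl⟩ ⟨y', hy', rfl⟩
        (by rw [← map_add]; exact hPsum)
    · have hPsum : extR P (y + y') ∈ V := haQ _ h0
      have hVsub' : ∀ v ∈ V, ∃ t : ℝ, v = t • (0 : Fin 2 → ℝ) := by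
        intro v hv
        rw [hVbot] at hv
        refine ⟨0, ?_⟩
        simpa using hv
      exact class_no_straddle hΔcone hΔfin hV hVsub' hσ ⟨y, hy, rfl⟩ ⟨y', hy', rfl⟩
        (by rw [← map_add]; exact hPsum)
  -- hull-level face property
  have hface2 : ∀ σ ∈ maxCones Δ, ∀ τ ∈ maxCones Δ,
      IsFaceOf (extR Q '' barCone Δ P σ ∩ extR Q '' barCone Δ P τ)
        (extR Q '' barCone Δ P σ) := by
    rcases htri with ⟨hVtop, hk0⟩ | ⟨hw, hk1, haQ⟩ | ⟨hVbot, hk2, haQ⟩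
    · -- k = 0
      subst hk0
      intro σ hσ τ hτ
      have hcone0 : IsCone ({0} : Set (Fin 0 → ℝ)) := by
        refine ⟨rfl, ?_, ?_⟩
        · intro a ha b hb
          rw [Set.mem_singleton_iff] at ha hb ⊢
          rw [ha, hb, add_zero]
        · intro c _ a ha
          rw [Set.mem_singleton_iff] at ha ⊢
          rw [ha, smul_zero]
      have hall : ∀ (S : Set (Fin 0 → ℝ)), IsCone S → S = {0} := by
        intro S hS
        ext a
        constructor
        · intro _
          rw [Set.mem_singleton_iff]
          exact fin0_eq_zero a
        · intro ha
          rw [Set.mem_singleton_iff] at ha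
          rw [ha]
          exact hS.zero_mem
      rw [hall _ (isCone_image _ (barCone_isCone σ)),
        hall _ (isCone_image _ (barCone_isCone τ)), Set.inter_self]
      exact isFaceOf_refl hcone0
    · -- k = 1
      subst hk1
      intro σ hσ τ hτ
      exact face_inter_1d (isCone_image _ (barCone_isCone σ))
        (isCone_image _ (barCone_isCone τ)) (hCstrict σ hσ)
    · -- k = 2
      subst hk2
      intro σ hσ τ hτ
      have hkQPint : LinearMap.ker Q ≤ LinearMap.ker P := by
        intro v hv
        rw [LinearMap.mem_ker] at hv ⊢
        have hmem := (hQker v).1 hv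
        rw [hVbot] at hmem
        have h' : extR P (toR v) = 0 := by simpa using hmem
        rw [extR_toR] at h'
        exact toR_eq_zero.1 h'
      obtain ⟨H', hH'⟩ := factor_through hQsurj hkQPint
      have hPQreal : extR P = (extR H').comp (extR Q) := by rw [hH', extR_comp]
      have hinj : Function.Injective (extR H) := by
        have hli : ∀ w : Fin 2 → ℝ, extR H' (extR H w) = w := by
          intro w
          obtain ⟨x, rfl⟩ := extR_surj hPsurj w
          have hh1 : extR H (extR P x) = extR Q x := by rw [hQPreal]; rfl
          rw [hh1]
          have hh2 : extR H' (extR Q x) = extR P x := by rw [hPQreal]; rfl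
          rw [hh2]
        intro a b hab
        rw [← hli a, ← hli b, hab]
      have himg : ∀ υ : Set (Fin n → ℝ),
          extR Q '' barCone Δ P υ = extR H '' (extR P '' barCone Δ P υ) := by
        intro υ
        rw [hQPreal, LinearMap.coe_comp, Set.image_comp]
      have hLin0 : ∀ υ ∈ maxCones Δ, ∀ x : Fin 2 → ℝ, x ∈ extR P '' barCone Δ P υ →
          -x ∈ extR P '' barCone Δ P υ → x = 0 := by
        intro υ hυ x hx hnx
        have := hLin υ hυ x hx hnx
        rw [hVbot] at this
        simpa using this
      have hfq := classes_face hΔcone hΔfin hLin0 hσ hτ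
      have hres := hfq.image hinj
      rw [Set.image_inter hinj] at hres
      rw [himg σ, himg τ]
      exact hres
  -- the six fields
  have hLQ : L ≤ LinearMap.ker Q := by
    intro v hv
    apply hkerPQint
    rw [hPker]
    exact hv
  have hPrim : IsPrimitive (LinearMap.ker Q) := by
    intro v m hm hmv
    rw [LinearMap.mem_ker] at hmv ⊢
    rw [map_smul] at hmv
    funext i
    have := congrFun hmv i
    have h2 : m * Q v i = 0 := this
    rcases mul_eq_zero.mp h2 with h | h
    · exact absurd h hm
    · exact h
  have hconeQ : IsConeMap Q Δ {ρ | ∃ σ ∈ maxCones Δ, IsFaceOf ρ (extR Q '' barCone Δ P σ)} := by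
    intro c hc
    obtain ⟨τ, hτ, hsub⟩ := exists_maxCone hΔfin hc
    exact ⟨extR Q '' barCone Δ P τ,
      ⟨τ, hτ, isFaceOf_refl (isCone_image _ (barCone_isCone τ))⟩,
      image_mono (hsub.trans (self_subset_barCone hτ))⟩
  have hfan : IsFan {ρ | ∃ σ ∈ maxCones Δ, IsFaceOf ρ (extR Q '' barCone Δ P σ)} := by
    refine ⟨⟨⟨?_, ?_⟩, ?_, ?_⟩, ?_⟩
    · -- finiteness
      have hsub : {ρ | ∃ σ ∈ maxCones Δ, IsFaceOf ρ (extR Q '' barCone Δ P σ)} ⊆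
          ⋃ σ ∈ maxCones Δ, {ρ | IsFaceOf ρ (extR Q '' barCone Δ P σ)} := by
        rintro ρ ⟨σ, hσ, h⟩
        exact Set.mem_iUnion₂.2 ⟨σ, hσ, h⟩
      apply Set.Finite.subset ?_ hsub
      apply Set.Finite.biUnion (hΔfin.subset (fun τ hτ => hτ.1))
      intro σ hσ
      obtain ⟨sg, hrat, hfin, heq⟩ := hshadowRat σ Q
      rw [heq]
      exact finite_faces hfin
    · -- rationality
      rintro ρ ⟨σ, hσ, hface⟩
      obtain ⟨sg, hrat, hfin, heq⟩ := hshadowRat σ Q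
      rw [heq] at hface
      have hρeq : ρ = coneHull (sg ∩ ρ) := face_eq_coneHull_inter hface
      have hS'fin : (toR ⁻¹' (sg ∩ ρ) : Set (Fin k → ℤ)).Finite :=
        Set.Finite.preimage (toR_inj.injOn) (hfin.inter_of_left ρ)
      have himg : toR '' (toR ⁻¹' (sg ∩ ρ)) = sg ∩ ρ := by
        apply le_antisymm
        · rintro _ ⟨u, hu, rfl⟩
          exact hu
        · intro g hg
          obtain ⟨u, rfl⟩ := hrat g hg.1
          exact ⟨u, hg, rfl⟩
      refine ⟨hS'fin.toFinset, ?_⟩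
      have hcoe : (toR '' ↑(hS'fin.toFinset) : Set (Fin k → ℝ)) = sg ∩ ρ := by
        rw [Set.Finite.coe_toFinset, himg]
      rw [hcoe]
      exact hρeq
    · -- face closure
      rintro ρ ⟨σ, hσ, hρ⟩ ρ' hρ'
      exact ⟨σ, hσ, hρ'.trans hρ⟩
    · -- pairwise faces
      rintro ρ₁ ⟨σ₁, hσ₁, hρ₁⟩ ρ₂ ⟨σ₂, hσ₂, hρ₂⟩
      exact face_inter_faces hρ₁ hρ₂ (hface2 σ₁ hσ₁ σ₂ hσ₂)
    · -- strict convexity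
      rintro ρ ⟨σ, hσ, hρ⟩
      exact (hCstrict σ hσ).subset hρ.2.1
  have huniv : ∀ (k' : ℕ) (F : (Fin n → ℤ) →ₗ[ℤ] (Fin k' → ℤ))
      (Δ' : Set (Set (Fin k' → ℝ))), IsFan Δ' → IsConeMap F Δ Δ' →
      L ≤ LinearMap.ker F →
      ∃ Ft : (Fin k → ℤ) →ₗ[ℤ] (Fin k' → ℤ),
        IsConeMap Ft {ρ | ∃ σ ∈ maxCones Δ, IsFaceOf ρ (extR Q '' barCone Δ P σ)} Δ' ∧
        F = Ft.comp Q := by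
    intro k' F Δ' hfan' hmapF hLF
    have hkerPF : LinearMap.ker P ≤ LinearMap.ker F := by rw [hPker]; exact hLF
    obtain ⟨G, hG⟩ := factor_through hPsurj hkerPF
    have hFG : extR F = (extR G).comp (extR P) := by rw [hG, extR_comp]
    have hκ : ∀ σ ∈ maxCones Δ, ∃ κ ∈ Δ', extR F '' barCone Δ P σ ⊆ κ := fun σ hσ =>
      kappa_main hΔcone hfan' hFG hmapF hσ.1
    have hVkill : ∀ w ∈ V, extR G w = 0 := by
      intro w hw
      have hle : V ≤ LinearMap.ker (extR G) := by
        rw [hV]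
        apply Submodule.span_le.2
        intro x hx
        obtain ⟨υ, hυ, hx1, hx2⟩ := Set.mem_iUnion₂.1 hx
        obtain ⟨κ, hκΔ, hκsub⟩ := hκ υ hυ
        obtain ⟨y, hy, rfl⟩ := hx1
        obtain ⟨y', hy', hy'e⟩ := hx2
        have h1 : extR G (extR P y) ∈ κ := hκsub ⟨y, hy, by rw [hFG]; rfl⟩
        have h2 : - extR G (extR P y) ∈ κ := by
          have h2' : extR G (extR P y') ∈ κ := hκsub ⟨y', hy', by rw [hFG]; rfl⟩
          rw [hy'e, map_neg] at h2'
          exact h2'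
        have hmem : extR G (extR P y) = 0 := hfan'.2 κ hκΔ _ h1 h2
        show extR P y ∈ (LinearMap.ker (extR G) : Set (Fin 2 → ℝ))
        rw [SetLike.mem_coe, LinearMap.mem_ker]
        exact hmem
      exact LinearMap.mem_ker.1 (hle hw)
    have hkerQF : LinearMap.ker Q ≤ LinearMap.ker F := by
      intro v hv
      rw [LinearMap.mem_ker] at hv ⊢
      have hPv : extR P (toR v) ∈ V := (hQker v).1 hv
      have hF0 : extR F (toR v) = 0 := by
        rw [hFG]
        exact hVkill _ hPv
      rw [← toR_eq_zero, ← extR_toR]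
      exact hF0
    obtain ⟨Ft, hFt⟩ := factor_through hQsurj hkerQF
    refine ⟨Ft, ?_, hFt⟩
    rintro ρ ⟨σ, hσ, hface⟩
    obtain ⟨κ, hκΔ, hκsub⟩ := hκ σ hσ
    refine ⟨κ, hκΔ, ?_⟩
    rintro _ ⟨x, hx, rfl⟩
    obtain ⟨y, hy, rfl⟩ := hface.2.1 hx
    have hcomp : extR Ft (extR Q y) = extR F y := by
      rw [hFt, extR_comp]
      rfl
    rw [hcomp]
    exact hκsub ⟨y, hy, rfl⟩
  exact ⟨hQsurj, hLQ, hPrim, hfan, hconeQ, huniv⟩
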